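/- arXiv:2209.08943 — 6 statements merged into one kernel-verified Lean document; each statement's English description precedes it below -/
import Mathlib

section
/- Assume assumptions A1 and A2 hold, that m_ω = M_ω − 1 and M_F > d − 2M_ω, and that the gradient lower bound |∇ω(x)| ≥ C|x|^{m_ω} holds for ALL x ∈ ℝ^d with |x| ≥ 1 (not only for x ∈ Σ ∩ supp F). Then assumption A5 is fulfilled: for every κ > 0, ∫_{D_κ} |F(x)|/ω(x)² dx < ∞. -/
/-!
On `D_κ` we have `m_ω + 2 - M_ω = 1`, so for `|x| ≥ 2` the closed ball of radius
`r = min κ 1 · |x| / 2` around `x` contains no zero of `ω`, and on it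
`|∇ω| ≥ δ ≍ |x|^(M_ω - 1)` by the gradient bound. Minimising `|ω| + (δ / 2) |· - x|` over this
ball gives `|ω x| ≥ δ r / 2`: otherwise the minimiser lies in the open ball, where stepping
against `sign ω · ∇ω` lowers `|ω|` faster than the penalty grows. Hence `|ω x| ≳ |x|^M_ω` and
`|F| / ω² ≲ |x|^(-(M_F + 2 M_ω))`, which is integrable at infinity because
`M_F + 2 M_ω > d`; the remaining part of `D_κ` is compact and `ω` does not vanish on it.
-/

open MeasureTheory Real Filter Topology Metric Set

theorem HasDerivAt.eventually_lt_of_neg {f : ℝ → ℝ} {f' a : ℝ} (hf : HasDerivAt f f' a)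
    (hf' : f' < 0) : ∀ᶠ t in 𝓝[>] a, f t < f a := by
  have hslope : Tendsto (slope f a) (𝓝[>] a) (𝓝 f') := by
    simpa [sdiff_singleton_eq_self self_notMem_Ioi] using
      (hasDerivWithinAt_iff_tendsto_slope.mp (hf.hasDerivWithinAt (s := Ioi a)))
  filter_upwards [hslope.eventually_lt_const hf', self_mem_nhdsWithin] with t ht hat
  rwa [slope_def_field, div_lt_iff₀ (sub_pos.2 hat), zero_mul, sub_neg] at ht

theorem two_rpow_neg_abs_mul_rpow_le {a b m : ℝ} (ha : 0 < a) (hab : a / 2 ≤ b)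
    (hba : b ≤ 2 * a) : 2 ^ (-|m|) * a ^ m ≤ b ^ m := by
  rcases le_or_gt 0 m with hm | hm
  · calc 2 ^ (-|m|) * a ^ m = (a / 2) ^ m := by
          rw [abs_of_nonneg hm, rpow_neg zero_le_two, div_rpow ha.le zero_le_two, inv_mul_eq_div]
      _ ≤ b ^ m := rpow_le_rpow (by positivity) hab hm
  · calc 2 ^ (-|m|) * a ^ m = (2 * a) ^ m := by
          rw [abs_of_neg hm, neg_neg, mul_rpow zero_le_two ha.le]
      _ ≤ b ^ m := rpow_le_rpow_of_nonpos (by linarith) hba hm.le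

theorem rpow_neg_le_two_rpow_mul_one_add_rpow_neg {t s : ℝ} (ht : 1 ≤ t) (hs : 0 ≤ s) :
    t ^ (-s) ≤ 2 ^ s * (1 + t) ^ (-s) := by
  have ht0 : 0 < t := by linarith
  calc t ^ (-s) = t⁻¹ ^ s := by rw [rpow_neg ht0.le, inv_rpow ht0.le]
    _ ≤ (2 / (1 + t)) ^ s := by
        gcongr
        rw [inv_eq_one_div, div_le_div_iff₀ ht0 (by linarith)]
        linarith
    _ = 2 ^ s * (1 + t) ^ (-s) := by
        rw [div_rpow zero_le_two (by linarith), rpow_neg (by linarith), div_eq_mul_inv]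

theorem abs_div_sq_le_rpow {t u v K c a b : ℝ} (ht : 0 < t) (hc : 0 < c)
    (hu : |u| ≤ K * t ^ (-a)) (hv : c * t ^ b ≤ |v|) :
    |u| / v ^ 2 ≤ K / c ^ 2 * t ^ (-(a + 2 * b)) := by
  calc |u| / v ^ 2 ≤ |u| / (c * t ^ b) ^ 2 := by
        rw [← sq_abs v]; gcongr
    _ ≤ K * t ^ (-a) / (c * t ^ b) ^ 2 := by gcongr
    _ = K / c ^ 2 * t ^ (-(a + 2 * b)) := by
        rw [neg_add, rpow_add ht, rpow_neg ht.le (2 * b), two_mul, rpow_add ht]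
        field_simp

section InnerProductSpace

variable {E : Type*} [NormedAddCommGroup E] [InnerProductSpace ℝ E]

theorem DifferentiableAt.exists_unit_eventually_abs_add_lt [CompleteSpace E] {ω : E → ℝ} {y : E}
    {c : ℝ} (hω : DifferentiableAt ℝ ω y) (hy : ω y ≠ 0) (hc : 0 ≤ c)
    (hcG : c < ‖gradient ω y‖) :
    ∃ v : E, ‖v‖ = 1 ∧ ∀ᶠ t in 𝓝[>] (0 : ℝ), |ω (y + t • v)| + c * t < |ω y| := by
  set G := ‖gradient ω y‖
  have hG : 0 < G := hc.trans_lt hcG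
  set σ : ℝ := (SignType.sign (ω y) : ℝ)
  have hσ : |σ| = 1 := by
    rcases hy.lt_or_gt with h | h <;> simp [σ, h]
  set v := -(σ / G) • gradient ω y
  have hline : HasDerivAt (fun t : ℝ => y + t • v) v 0 := by
    simpa using ((hasDerivAt_id (0 : ℝ)).smul_const v).const_add y
  have hdir : (σ • fderiv ℝ ω y) v = -G := by
    rw [FunLike.coe_smul, Pi.smul_apply, ← inner_gradient_left, inner_smul_right,
      real_inner_self_eq_norm_sq, smul_eq_mul]
    have : σ * σ = 1 := by rw [← abs_mul_abs_self, hσ, one_mul]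
    change σ * (-(σ / G) * G ^ 2) = -G
    field_simp
    linear_combination -this
  have habs : HasDerivAt (fun t : ℝ => |ω (y + t • v)| + c * t) (-G + c) 0 := by
    have h := (hω.hasFDerivAt.abs hy).comp_hasDerivAt_of_eq 0 hline (by simp)
    convert! h.add ((hasDerivAt_id (0 : ℝ)).const_mul c) using 1
    rw [mul_one, ← hdir]
  refine ⟨v, ?_, ?_⟩
  · rw [norm_smul, norm_neg, norm_div, Real.norm_eq_abs, hσ, norm_norm, one_div_mul_cancel hG.ne']
  · simpa using habs.eventually_lt_of_neg (by linarith)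

theorem mul_div_two_le_abs_of_ne_zero_on_closedBall [FiniteDimensional ℝ E] {ω : E → ℝ} {x : E}
    {r δ : ℝ} (hω : Differentiable ℝ ω) (hr : 0 ≤ r)
    (hgrad : ∀ y ∈ closedBall x r, δ ≤ ‖gradient ω y‖) (hne : ∀ y ∈ closedBall x r, ω y ≠ 0) :
    δ * r / 2 ≤ |ω x| := by
  by_contra! hsmall
  have hδ : 0 < δ := pos_of_mul_pos_left (by linarith [abs_nonneg (ω x)]) hr
  set g : E → ℝ := fun y => |ω y| + δ / 2 * ‖y - x‖
  obtain ⟨y₀, hy₀, hmin⟩ := (isCompact_closedBall x r).exists_isMinOn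
    ⟨x, mem_closedBall_self hr⟩ (by have := hω.continuous; fun_prop : Continuous g).continuousOn
  have hinterior : ‖y₀ - x‖ < r := by
    by_contra! hbd
    have : g y₀ ≤ g x := hmin (mem_closedBall_self hr)
    simp only [g, sub_self, norm_zero, mul_zero, add_zero] at this
    nlinarith [abs_nonneg (ω y₀)]
  obtain ⟨v, hv, hdesc⟩ := (hω y₀).exists_unit_eventually_abs_add_lt (hne y₀ hy₀)
    (half_pos hδ).le (by linarith [hgrad y₀ hy₀])
  obtain ⟨t, hlt, ht, htr⟩ :=
    (hdesc.and (Ioo_mem_nhdsGT (sub_pos.2 hinterior))).exists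
  have hstep : ‖y₀ + t • v - x‖ ≤ ‖y₀ - x‖ + t := by
    calc ‖y₀ + t • v - x‖ = ‖(y₀ - x) + t • v‖ := by rw [add_sub_right_comm]
      _ ≤ ‖y₀ - x‖ + t := by
        grw [norm_add_le, norm_smul, hv, Real.norm_of_nonneg ht.le, mul_one]
  have hmem : y₀ + t • v ∈ closedBall x r := by
    rw [mem_closedBall, dist_eq_norm]; linarith
  have : g y₀ ≤ g (y₀ + t • v) := hmin hmem
  simp only [g] at this
  nlinarith

theorem mul_rpow_le_abs_of_le_infDist [FiniteDimensional ℝ E] {ω : E → ℝ} {Z : Set E}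
    {C m κ : ℝ} (hω : Differentiable ℝ ω) (hC : 0 ≤ C) (hκ : 0 < κ)
    (hgrad : ∀ y, 1 ≤ ‖y‖ → C * ‖y‖ ^ m ≤ ‖gradient ω y‖)
    (hZ : ∀ y, 1 ≤ ‖y‖ → ω y = 0 → y ∈ Z) {x : E} (hx : 2 ≤ ‖x‖)
    (hxZ : κ * ‖x‖ ≤ infDist x Z) :
    C * 2 ^ (-|m|) * min κ 1 / 4 * ‖x‖ ^ (m + 1) ≤ |ω x| := by
  have hx0 : 0 < ‖x‖ := by linarith
  set r := min κ 1 * ‖x‖ / 2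
  have hr : 0 ≤ r := by positivity
  have hrκ : r ≤ κ * ‖x‖ / 2 := by have := min_le_left κ 1; simp only [r]; nlinarith
  have hrx : r ≤ ‖x‖ / 2 := by have := min_le_right κ 1; simp only [r]; nlinarith
  have hnorm : ∀ y ∈ closedBall x r, ‖x‖ / 2 ≤ ‖y‖ ∧ ‖y‖ ≤ 2 * ‖x‖ := by
    intro y hy
    have := abs_le.mp (abs_norm_sub_norm_le y x)
    rw [mem_closedBall, dist_eq_norm] at hy
    constructor <;> linarith
  have hgrad' : ∀ y ∈ closedBall x r, C * (2 ^ (-|m|) * ‖x‖ ^ m) ≤ ‖gradient ω y‖ := by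
    intro y hy
    obtain ⟨h₁, h₂⟩ := hnorm y hy
    calc C * (2 ^ (-|m|) * ‖x‖ ^ m) ≤ C * ‖y‖ ^ m := by
          gcongr; exact two_rpow_neg_abs_mul_rpow_le hx0 h₁ h₂
      _ ≤ ‖gradient ω y‖ := hgrad y (by linarith)
  have hne : ∀ y ∈ closedBall x r, ω y ≠ 0 := by
    intro y hy hy0
    have hyZ : y ∈ Z := hZ y (by linarith [(hnorm y hy).1]) hy0
    have : infDist x Z ≤ r := (infDist_le_dist_of_mem hyZ).trans (mem_closedBall'.mp hy)
    nlinarith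
  calc C * 2 ^ (-|m|) * min κ 1 / 4 * ‖x‖ ^ (m + 1)
      = C * (2 ^ (-|m|) * ‖x‖ ^ m) * r / 2 := by rw [rpow_add_one hx0.ne']; ring
    _ ≤ |ω x| := mul_div_two_le_abs_of_ne_zero_on_closedBall hω hr hgrad' hne

section Integrability

variable [FiniteDimensional ℝ E] [MeasurableSpace E] [BorelSpace E] {μ : Measure E}
  [μ.IsAddHaarMeasure]

theorem integrableOn_norm_rpow_neg {s : ℝ} (hs : Module.finrank ℝ E < s) :
    IntegrableOn (fun x : E => ‖x‖ ^ (-s)) {x | 1 ≤ ‖x‖} μ := by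
  have hs0 : 0 ≤ s := (Nat.cast_nonneg _).trans hs.le
  refine ((integrable_one_add_norm hs).const_mul (2 ^ s)).integrableOn.mono'
    (by fun_prop : Measurable fun x : E => ‖x‖ ^ (-s)).aestronglyMeasurable ?_
  refine (ae_restrict_iff' (isClosed_le continuous_const continuous_norm).measurableSet).2
    (ae_of_all _ fun x hx => ?_)
  rw [norm_of_nonneg (by positivity)]
  exact rpow_neg_le_two_rpow_mul_one_add_rpow_neg hx hs0

theorem IsClosed.integrableOn_of_norm_le_rpow_neg {F : Type*} [NormedAddCommGroup F]
    {f : E → F} {S : Set E} (hS : IsClosed S) (hf : ContinuousOn f S) {R K s : ℝ} (hR : 1 ≤ R)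
    (hs : Module.finrank ℝ E < s) (hbound : ∀ x ∈ S, R ≤ ‖x‖ → ‖f x‖ ≤ K * ‖x‖ ^ (-s)) :
    IntegrableOn f S μ := by
  rw [← inter_union_sdiff S (closedBall 0 R)]
  refine IntegrableOn.union ?_ ?_
  · exact (hf.mono inter_subset_left).integrableOn_compact
      ((isCompact_closedBall 0 R).inter_left hS)
  · have hmeas : MeasurableSet (S \ closedBall 0 R) :=
      hS.measurableSet.diff isClosed_closedBall.measurableSet
    have hfar : ∀ x ∈ S \ closedBall 0 R, R < ‖x‖ := fun x hx => by
      simpa using hx.2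
    have hint : IntegrableOn (fun x => K * ‖x‖ ^ (-s)) {x | 1 ≤ ‖x‖} μ :=
      (integrableOn_norm_rpow_neg hs).const_mul K
    refine (hint.mono_set fun x hx => ?_).mono'
      ((hf.mono sdiff_subset).aestronglyMeasurable hmeas) ?_
    · exact hR.trans (hfar x hx).le
    · exact (ae_restrict_iff' hmeas).2 (ae_of_all _ fun x hx => hbound x hx.1 (hfar x hx).le)

end Integrability

end InnerProductSpace

theorem statement2_general
    (d : ℕ)
    (M_F M_ω m_ω : ℝ) (hm : m_ω = M_ω - 1) (hMF : M_F > d - 2 * M_ω)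
    (F ω : EuclideanSpace ℝ (Fin d) → ℝ)
    (hF : ContDiff ℝ 2 F) (hω : ContDiff ℝ 4 ω)
    (C_F : ℝ)
    (hA1 : ∀ i : ℕ, i ≤ 2 → ∀ x : EuclideanSpace ℝ (Fin d),
      ‖iteratedFDeriv ℝ i F x‖ ≤ C_F * (max 1 ‖x‖) ^ (-M_F - (i : ℝ)))
    (C_g : ℝ) (hCg : 0 < C_g)
    (hA3' : ∀ x : EuclideanSpace ℝ (Fin d), 1 ≤ ‖x‖ →
      C_g * ‖x‖ ^ m_ω ≤ ‖gradient ω x‖) :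
    ∀ κ : ℝ, 0 < κ → IntegrableOn (fun x => |F x| / (ω x) ^ 2)
      {x : EuclideanSpace ℝ (Fin d) | 1 ≤ ‖x‖ ∧
        κ * ‖x‖ ^ (m_ω + 2 - M_ω) ≤
          Metric.infDist x {y | ω y = 0 ∧ (gradient ω 0 = 0 → y ≠ 0)}} := by
  subst hm
  intro κ hκ
  set Z := {y : EuclideanSpace ℝ (Fin d) | ω y = 0 ∧ (gradient ω 0 = 0 → y ≠ 0)}
  rw [show M_ω - 1 + 2 - M_ω = 1 by ring]
  simp_rw [rpow_one]
  have hZ : ∀ y, 1 ≤ ‖y‖ → ω y = 0 → y ∈ Z := fun y hy hy0 =>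
    ⟨hy0, fun _ h => by rw [h, norm_zero] at hy; linarith⟩
  have hne : ∀ x ∈ {x | 1 ≤ ‖x‖ ∧ κ * ‖x‖ ≤ infDist x Z}, ω x ≠ 0 := fun x hx hx0 => by
    have := hx.2.trans_eq (infDist_zero_of_mem (hZ x hx.1 hx0))
    nlinarith [hx.1]
  have hFdecay : ∀ x : EuclideanSpace ℝ (Fin d), 1 ≤ ‖x‖ → |F x| ≤ C_F * ‖x‖ ^ (-M_F) := by
    intro x hx
    simpa [max_eq_right hx] using hA1 0 (by norm_num) x
  set c := C_g * 2 ^ (-|M_ω - 1|) * min κ 1 / 4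
  have hc : 0 < c := by positivity
  refine IsClosed.integrableOn_of_norm_le_rpow_neg ?_ ?_ one_le_two (K := C_F / c ^ 2)
    (s := M_F + 2 * M_ω)
    (by rw [finrank_euclideanSpace_fin]; linarith) fun x hx hx2 => ?_
  · exact (isClosed_le continuous_const continuous_norm).inter
      (isClosed_le (by fun_prop) (continuous_infDist_pt Z))
  · exact ((hF.continuous.abs).continuousOn).div (hω.continuous.pow 2).continuousOn
      fun x hx => pow_ne_zero 2 (hne x hx)
  · have hωx := mul_rpow_le_abs_of_le_infDist (hω.differentiable (by norm_num)) hCg.le hκ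
      hA3' hZ hx2 hx.2
    rw [sub_add_cancel] at hωx
    rw [norm_of_nonneg (by positivity)]
    exact abs_div_sq_le_rpow (by linarith) hc (hFdecay x hx.1) hωx

/-- Lemma 1.2: a sufficient condition for assumption A5.  Here `Σ₀` is encoded as
`{x | ω x = 0 ∧ (gradient ω 0 = 0 → x ≠ 0)}`, which equals `Σ \ {0}` if `0` is a
critical point of `ω` and equals `Σ` otherwise. -/
theorem statement2
    (d : ℕ) (hd : 2 ≤ d)
    (M_F M_ω m_ω : ℝ) (hm : m_ω = M_ω - 1) (hMF : M_F > d - 2 * M_ω)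
    (F ω : EuclideanSpace ℝ (Fin d) → ℝ)
    (hF : ContDiff ℝ 2 F) (hω : ContDiff ℝ 4 ω)
    (C_F : ℝ) (hCF : 0 < C_F)
    (hA1 : ∀ i : ℕ, i ≤ 2 → ∀ x : EuclideanSpace ℝ (Fin d),
      ‖iteratedFDeriv ℝ i F x‖ ≤ C_F * (max 1 ‖x‖) ^ (-M_F - (i : ℝ)))
    (C_ω : ℝ) (hCω : 0 < C_ω)
    (hA2 : ∀ i : ℕ, i ≤ 4 → ∀ x ∈ tsupport F,
      ‖iteratedFDeriv ℝ i ω x‖ ≤ C_ω * (max 1 ‖x‖) ^ (M_ω - (i : ℝ)))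
    (C_g : ℝ) (hCg : 0 < C_g)
    (hA3' : ∀ x : EuclideanSpace ℝ (Fin d), 1 ≤ ‖x‖ →
      C_g * ‖x‖ ^ m_ω ≤ ‖gradient ω x‖) :
    ∀ κ : ℝ, 0 < κ → IntegrableOn (fun x => |F x| / (ω x) ^ 2)
      {x : EuclideanSpace ℝ (Fin d) | 1 ≤ ‖x‖ ∧
        κ * ‖x‖ ^ (m_ω + 2 - M_ω) ≤
          Metric.infDist x {y | ω y = 0 ∧ (gradient ω 0 = 0 → y ≠ 0)}} :=
  statement2_general d M_F M_ω m_ω hm hMF F ω hF hω C_F hA1 C_g hCg hA3'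
end

section
/- Assume ω : ℝ^d → ℝ is C⁴-smooth with |∂^α ω(x)| ≤ C⟨x⟩^{M_ω−|α|} for all |α| ≤ 4 and all x ∈ ℝ^d, that m_ω = M_ω − 1, and that |∇ω(x)| ≥ C|x|^{m_ω} for all x ∈ ℝ^d with |x| ≥ 1. Then for every κ > 0 there exists a constant C(κ) > 0 such that |ω(x)| ≥ C(κ)|x|^{M_ω} for all x ∈ D_κ = {x : |x| ≥ 1, dist(x, Σ₀) ≥ κ|x|}. -/
/-!
Let `R = ‖x‖`. On the ball `B(x, R/2)` the Hessian of `ω` is `O(R^(M_ω-2))`, so on a ball of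
radius `δR` (small `δ`) the derivative of `ω` stays within `‖∇ω(x)‖/2` of its value at `x`.
Moving from `x` against the sign of `ω(x)` along `∇ω(x)`, `|ω|` then decreases at rate at least
`‖∇ω(x)‖/2`: either `|ω(x)| ≥ ‖∇ω(x)‖ δR/2`, or `ω` vanishes at distance `≤ 2|ω(x)|/‖∇ω(x)‖`
from `x`, at a point of `Σ₀` (it is far from `0`), which is then at distance `≥ κR`.
As `‖∇ω(x)‖ ≥ C_g R^(M_ω-1)`, both cases give `|ω(x)| ≥ C_g min(δ, κ) R^(M_ω) / 2`.
-/

open MeasureTheory Real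

open Metric Set

theorem exists_zero_mem_Icc_of_deriv_le_neg {φ φ' : ℝ → ℝ} {a T : ℝ} (ha : 0 < a)
    (hφ : ∀ t ∈ Icc 0 T, HasDerivAt φ (φ' t) t) (hφ' : ∀ t ∈ Icc 0 T, φ' t ≤ -a)
    (h0 : 0 ≤ φ 0) (hT : φ 0 ≤ a * T) :
    ∃ t ∈ Icc 0 (φ 0 / a), φ t = 0 := by
  set s := φ 0 / a
  have hs0 : 0 ≤ s := div_nonneg h0 ha.le
  have hsub : Icc 0 s ⊆ Icc 0 T := Icc_subset_Icc_right ((div_le_iff₀' ha).2 hT)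
  have hcont : ContinuousOn φ (Icc 0 s) := fun t ht =>
    (hφ t (hsub ht)).continuousAt.continuousWithinAt
  have hdrop : φ s - φ 0 ≤ -a * (s - 0) :=
    (convex_Icc 0 s).image_sub_le_mul_sub_of_deriv_le hcont
      (fun t ht => (hφ t (hsub (interior_subset ht))).differentiableAt.differentiableWithinAt)
      (fun t ht => (hφ t (hsub (interior_subset ht))).deriv ▸ hφ' t (hsub (interior_subset ht)))
      0 (left_mem_Icc.2 hs0) s (right_mem_Icc.2 hs0) hs0
  have hφs : φ s ≤ 0 := by
    have : a * s = φ 0 := mul_div_cancel₀ _ ha.ne'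
    linarith
  exact intermediate_value_Icc' hs0 hcont ⟨hφs, h0⟩

section NormedSpace

variable {E : Type*} [NormedAddCommGroup E] [NormedSpace ℝ E]

theorem exists_zero_on_ray_of_fderiv_close {f : E → ℝ} (hf : Differentiable ℝ f)
    {x v : E} (hv : ‖v‖ = 1) {g r : ℝ} (hg : 0 < g) (hfv : fderiv ℝ f x v = -g)
    (hclose : ∀ y ∈ closedBall x r, ‖fderiv ℝ f y - fderiv ℝ f x‖ ≤ g / 2)
    (h0 : 0 ≤ f x) (hr : 2 * f x ≤ g * r) :
    ∃ t ∈ Icc 0 (2 * f x / g), f (x + t • v) = 0 := by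
  have hderiv (t : ℝ) :
      HasDerivAt (fun s : ℝ => f (x + s • v)) (fderiv ℝ f (x + t • v) v) t := by
    have hline : HasDerivAt (fun s : ℝ => x + s • v) v t := by
      simpa using ((hasDerivAt_id t).smul_const v).const_add x
    exact (hf _).hasFDerivAt.comp_hasDerivAt t hline
  have hslope : ∀ t ∈ Icc 0 r, fderiv ℝ f (x + t • v) v ≤ -(g / 2) := by
    intro t ht
    have hmem : x + t • v ∈ closedBall x r := by
      rw [mem_closedBall, dist_eq_norm, add_sub_cancel_left, norm_smul, hv, mul_one,
        Real.norm_of_nonneg ht.1]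
      exact ht.2
    have hvar : (fderiv ℝ f (x + t • v) - fderiv ℝ f x) v ≤ g / 2 :=
      calc (fderiv ℝ f (x + t • v) - fderiv ℝ f x) v
          ≤ ‖(fderiv ℝ f (x + t • v) - fderiv ℝ f x) v‖ := le_abs_self _
        _ ≤ ‖fderiv ℝ f (x + t • v) - fderiv ℝ f x‖ * ‖v‖ := ContinuousLinearMap.le_opNorm _ _
        _ ≤ g / 2 := by rw [hv, mul_one]; exact hclose _ hmem
    rw [sub_apply, hfv] at hvar
    linarith
  obtain ⟨t, ht, hzero⟩ := exists_zero_mem_Icc_of_deriv_le_neg (φ := fun s => f (x + s • v))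
    (half_pos hg) (fun t _ => hderiv t) hslope (by simpa using h0) (by simp; linarith)
  refine ⟨t, ?_, hzero⟩
  convert ht using 2
  simp only [zero_smul, add_zero]
  field_simp

theorem exists_zero_dist_le_of_fderiv_close {f : E → ℝ} (hf : Differentiable ℝ f)
    {x v : E} (hv : ‖v‖ = 1) {g r : ℝ} (hg : 0 < g) (hfv : fderiv ℝ f x v = -g)
    (hclose : ∀ y ∈ closedBall x r, ‖fderiv ℝ f y - fderiv ℝ f x‖ ≤ g / 2)
    (hr : 2 * |f x| ≤ g * r) :
    ∃ z, f z = 0 ∧ dist z x ≤ 2 * |f x| / g := by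
  have hdist (t : ℝ) (w : E) (ht : 0 ≤ t) (hw : ‖w‖ = 1) : dist (x + t • w) x = t := by
    rw [dist_eq_norm, add_sub_cancel_left, norm_smul, hw, mul_one, Real.norm_of_nonneg ht]
  rcases le_or_gt 0 (f x) with hpos | hneg
  · rw [abs_of_nonneg hpos] at hr ⊢
    obtain ⟨t, ht, hzero⟩ := exists_zero_on_ray_of_fderiv_close hf hv hg hfv hclose hpos hr
    exact ⟨_, hzero, (hdist t v ht.1 hv).trans_le ht.2⟩
  · have hfv' : fderiv ℝ (-f) x (-v) = -g := by simp [fderiv_neg, hfv]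
    have hclose' : ∀ y ∈ closedBall x r, ‖fderiv ℝ (-f) y - fderiv ℝ (-f) x‖ ≤ g / 2 := by
      simpa only [fderiv_neg, neg_sub_neg, norm_sub_rev] using hclose
    rw [abs_of_neg hneg] at hr ⊢
    obtain ⟨t, ht, hzero⟩ := exists_zero_on_ray_of_fderiv_close hf.neg (by rwa [norm_neg])
      hg hfv' hclose' (neg_nonneg.2 hneg.le) hr
    exact ⟨_, neg_eq_zero.1 hzero, (hdist t (-v) ht.1 (by rwa [norm_neg])).trans_le ht.2⟩

end NormedSpace

theorem gradient_norm_mul_min_infDist_le {E : Type*} [NormedAddCommGroup E]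
    [InnerProductSpace ℝ E] [CompleteSpace E] {f : E → ℝ} (hf : Differentiable ℝ f)
    {x : E} {r : ℝ} {S : Set E}
    (hclose : ∀ y ∈ closedBall x r, ‖fderiv ℝ f y - fderiv ℝ f x‖ ≤ ‖gradient f x‖ / 2)
    (hS : ∀ z ∈ closedBall x r, f z = 0 → z ∈ S) :
    ‖gradient f x‖ * min r (infDist x S) ≤ 2 * |f x| := by
  set G := gradient f x
  rcases eq_or_ne G 0 with hG | hG
  · simp [hG]
  have hg : 0 < ‖G‖ := norm_pos_iff.2 hG
  by_cases hr : 2 * |f x| ≤ ‖G‖ * r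
  · have hv : ‖-(‖G‖⁻¹ • G)‖ = 1 := by
      rw [norm_neg, norm_smul, norm_inv, norm_norm, inv_mul_cancel₀ hg.ne']
    have hfv : fderiv ℝ f x (-(‖G‖⁻¹ • G)) = -‖G‖ := by
      rw [← InnerProductSpace.toDual_symm_apply, ← gradient]
      change inner ℝ G (-(‖G‖⁻¹ • G)) = -‖G‖
      rw [inner_neg_right, real_inner_smul_right, real_inner_self_eq_norm_sq]
      field_simp
    obtain ⟨z, hz, hzx⟩ := exists_zero_dist_le_of_fderiv_close hf hv hg hfv hclose hr
    have hzS : z ∈ S := hS z ((hzx.trans ((div_le_iff₀' hg).2 hr))) hz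
    calc ‖G‖ * min r (infDist x S) ≤ ‖G‖ * (2 * |f x| / ‖G‖) := by
          gcongr
          exact (min_le_right _ _).trans ((infDist_le_dist_of_mem hzS).trans (dist_comm x z ▸ hzx))
      _ = 2 * |f x| := mul_div_cancel₀ _ hg.ne'
  · calc ‖G‖ * min r (infDist x S) ≤ ‖G‖ * r := by gcongr; exact min_le_left _ _
      _ ≤ 2 * |f x| := by linarith

theorem rpow_le_max_mul_rpow {a R s t p : ℝ} (hs : 0 < s) (hR : 0 < R) (hsa : s * R ≤ a)
    (hat : a ≤ t * R) : a ^ p ≤ max (s ^ p) (t ^ p) * R ^ p := by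
  have ht : 0 ≤ t := hs.le.trans (le_of_mul_le_mul_right (hsa.trans hat) hR)
  rw [max_mul_of_nonneg _ _ (rpow_nonneg hR.le p), ← mul_rpow hs.le hR.le, ← mul_rpow ht hR.le]
  rcases le_total 0 p with hp | hp
  · exact le_max_of_le_right (rpow_le_rpow ((mul_pos hs hR).le.trans hsa) hat hp)
  · exact le_max_of_le_left (rpow_le_rpow_of_nonpos (mul_pos hs hR) hsa hp)

section Hessian

variable {E F : Type*} [NormedAddCommGroup E] [NormedSpace ℝ E] [NormedAddCommGroup F]
  [NormedSpace ℝ F]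

theorem norm_fderiv_sub_le_of_norm_iteratedFDeriv_two_le {f : E → F} (hf : ContDiff ℝ 2 f)
    {s : Set E} (hs : Convex ℝ s) {L : ℝ} (hL : ∀ y ∈ s, ‖iteratedFDeriv ℝ 2 f y‖ ≤ L)
    {x y : E} (hx : x ∈ s) (hy : y ∈ s) : ‖fderiv ℝ f y - fderiv ℝ f x‖ ≤ L * ‖y - x‖ := by
  have hdiff : Differentiable ℝ (fderiv ℝ f) :=
    (hf.fderiv_right (m := 1) (by norm_num)).differentiable (by norm_num)
  refine hs.norm_image_sub_le_of_norm_fderiv_le (fun z _ => hdiff z) (fun z hz => ?_) hx hy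
  rw [← norm_iteratedFDeriv_zero (𝕜 := ℝ), norm_iteratedFDeriv_fderiv, norm_iteratedFDeriv_fderiv]
  exact hL z hz

theorem norm_iteratedFDeriv_le_on_closedBall_half {f : E → F} {n : ℕ} {C p : ℝ}
    (hC : 0 ≤ C) (hbound : ∀ y, ‖iteratedFDeriv ℝ n f y‖ ≤ C * (max 1 ‖y‖) ^ p)
    {x : E} (hx : 1 ≤ ‖x‖) :
    ∀ y ∈ closedBall x (‖x‖ / 2),
      ‖iteratedFDeriv ℝ n f y‖ ≤ C * max ((1 / 2) ^ p) ((3 / 2) ^ p) * ‖x‖ ^ p := by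
  intro y hy
  rw [mem_closedBall, dist_eq_norm] at hy
  have hlow : 1 / 2 * ‖x‖ ≤ max 1 ‖y‖ :=
    le_max_of_le_right (by linarith [norm_sub_norm_le x y, norm_sub_rev x y])
  have hup : max 1 ‖y‖ ≤ 3 / 2 * ‖x‖ :=
    max_le (by linarith) (by linarith [norm_le_norm_add_norm_sub' y x])
  calc ‖iteratedFDeriv ℝ n f y‖ ≤ C * (max 1 ‖y‖) ^ p := hbound y
    _ ≤ C * (max ((1 / 2) ^ p) ((3 / 2) ^ p) * ‖x‖ ^ p) := by
      gcongr
      exact rpow_le_max_mul_rpow (by norm_num) (by linarith) hlow hup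
    _ = _ := (mul_assoc _ _ _).symm

theorem norm_fderiv_sub_le_on_closedBall_of_weighted_hessian {f : E → F} (hf : ContDiff ℝ 2 f)
    {C p : ℝ} (hC : 0 ≤ C) (hbound : ∀ y, ‖iteratedFDeriv ℝ 2 f y‖ ≤ C * (max 1 ‖y‖) ^ p)
    {x : E} (hx : 1 ≤ ‖x‖) {δ : ℝ} (hδ : δ ≤ 1 / 2) :
    ∀ y ∈ closedBall x (δ * ‖x‖), ‖fderiv ℝ f y - fderiv ℝ f x‖ ≤
      C * max ((1 / 2) ^ p) ((3 / 2) ^ p) * δ * ‖x‖ ^ (p + 1) := by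
  intro y hy
  have hx0 : 0 < ‖x‖ := one_pos.trans_le hx
  have hball : closedBall x (δ * ‖x‖) ⊆ closedBall x (‖x‖ / 2) :=
    closedBall_subset_closedBall (by nlinarith)
  calc ‖fderiv ℝ f y - fderiv ℝ f x‖ ≤ C * max ((1 / 2) ^ p) ((3 / 2) ^ p) * ‖x‖ ^ p * ‖y - x‖ :=
        norm_fderiv_sub_le_of_norm_iteratedFDeriv_two_le hf (convex_closedBall x _)
          (norm_iteratedFDeriv_le_on_closedBall_half hC hbound hx)
          (mem_closedBall_self (by positivity)) (hball hy)
    _ ≤ C * max ((1 / 2) ^ p) ((3 / 2) ^ p) * ‖x‖ ^ p * (δ * ‖x‖) := by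
        gcongr; rwa [← dist_eq_norm, ← mem_closedBall]
    _ = C * max ((1 / 2) ^ p) ((3 / 2) ^ p) * δ * ‖x‖ ^ (p + 1) := by
        rw [rpow_add_one hx0.ne']; ring

end Hessian

/-- The set `{y | ω y = 0 ∧ (gradient ω 0 = 0 → y ≠ 0)}` is the paper's `Σ₀`. -/
theorem statement3_general
    (d : ℕ)
    (M_ω m_ω : ℝ) (hm : m_ω = M_ω - 1)
    (ω : EuclideanSpace ℝ (Fin d) → ℝ)
    (hω : ContDiff ℝ 4 ω)
    (C_ω : ℝ) (hCω : 0 < C_ω)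
    (hA2 : ∀ i : ℕ, i ≤ 4 → ∀ x : EuclideanSpace ℝ (Fin d),
      ‖iteratedFDeriv ℝ i ω x‖ ≤ C_ω * (max 1 ‖x‖) ^ (M_ω - (i : ℝ)))
    (C_g : ℝ) (hCg : 0 < C_g)
    (hA3' : ∀ x : EuclideanSpace ℝ (Fin d), 1 ≤ ‖x‖ →
      C_g * ‖x‖ ^ m_ω ≤ ‖gradient ω x‖) :
    ∀ κ : ℝ, 0 < κ → ∃ C : ℝ, 0 < C ∧
      ∀ x : EuclideanSpace ℝ (Fin d), 1 ≤ ‖x‖ →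
        κ * ‖x‖ ≤ Metric.infDist x {y | ω y = 0 ∧ (gradient ω 0 = 0 → y ≠ 0)} →
        C * ‖x‖ ^ M_ω ≤ |ω x| := by
  intro κ hκ
  set K := max ((1 / 2 : ℝ) ^ (M_ω - 2)) ((3 / 2) ^ (M_ω - 2))
  have hK : 0 < K := lt_max_of_lt_left (by positivity)
  set δ := min (1 / 2 : ℝ) (C_g / (2 * (C_ω * K)))
  have hδ : 0 < δ := by positivity
  have hKδ : C_ω * K * δ ≤ C_g / 2 :=
    calc C_ω * K * δ ≤ C_ω * K * (C_g / (2 * (C_ω * K))) := by gcongr; exact min_le_right _ _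
      _ = C_g / 2 := by field_simp
  refine ⟨C_g * min δ κ / 2, by positivity, fun x hx hdist => ?_⟩
  have hx0 : 0 < ‖x‖ := one_pos.trans_le hx
  have hclose : ∀ y ∈ closedBall x (δ * ‖x‖),
      ‖fderiv ℝ ω y - fderiv ℝ ω x‖ ≤ ‖gradient ω x‖ / 2 := fun y hy =>
    calc ‖fderiv ℝ ω y - fderiv ℝ ω x‖ ≤ C_ω * K * δ * ‖x‖ ^ (M_ω - 2 + 1) :=
          norm_fderiv_sub_le_on_closedBall_of_weighted_hessian (hω.of_le (by norm_num)) hCω.le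
            (by exact_mod_cast hA2 2 (by norm_num)) hx (min_le_left _ _) y hy
      _ ≤ C_g / 2 * ‖x‖ ^ m_ω := by rw [hm, show M_ω - 2 + 1 = M_ω - 1 by ring]; gcongr
      _ ≤ ‖gradient ω x‖ / 2 := by linarith [hA3' x hx]
  have hzeros : ∀ z ∈ closedBall x (δ * ‖x‖), ω z = 0 →
      z ∈ {y | ω y = 0 ∧ (gradient ω 0 = 0 → y ≠ 0)} := by
    refine fun z hz hωz => ⟨hωz, fun _ hz0 => ?_⟩
    rw [hz0, mem_closedBall, dist_zero_left] at hz
    nlinarith [min_le_left (1 / 2 : ℝ) (C_g / (2 * (C_ω * K)))]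
  have hkey := gradient_norm_mul_min_infDist_le (hω.differentiable (by norm_num)) hclose hzeros
  calc C_g * min δ κ / 2 * ‖x‖ ^ M_ω = C_g * ‖x‖ ^ m_ω * min (δ * ‖x‖) (κ * ‖x‖) / 2 := by
        rw [← min_mul_of_nonneg _ _ hx0.le, show M_ω = m_ω + 1 by linarith, rpow_add_one hx0.ne']
        ring
    _ ≤ ‖gradient ω x‖ * min (δ * ‖x‖) (infDist x _) / 2 := by gcongr; exact hA3' x hx
    _ ≤ |ω x| := by linarith

/-- The key estimate in the proof of Lemma 1.2: on the set `D_κ` (with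
`m_ω = M_ω - 1`, so that `m_ω + 2 - M_ω = 1`) one has `|ω(x)| ≥ C(κ)|x|^{M_ω}`.
Here `Σ₀` is encoded as `{x | ω x = 0 ∧ (gradient ω 0 = 0 → x ≠ 0)}`, which
equals `Σ \ {0}` if `0` is a critical point of `ω` and equals `Σ` otherwise. -/
theorem statement3
    (d : ℕ) (hd : 2 ≤ d)
    (M_ω m_ω : ℝ) (hm : m_ω = M_ω - 1)
    (ω : EuclideanSpace ℝ (Fin d) → ℝ)
    (hω : ContDiff ℝ 4 ω)
    (C_ω : ℝ) (hCω : 0 < C_ω)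
    (hA2 : ∀ i : ℕ, i ≤ 4 → ∀ x : EuclideanSpace ℝ (Fin d),
      ‖iteratedFDeriv ℝ i ω x‖ ≤ C_ω * (max 1 ‖x‖) ^ (M_ω - (i : ℝ)))
    (C_g : ℝ) (hCg : 0 < C_g)
    (hA3' : ∀ x : EuclideanSpace ℝ (Fin d), 1 ≤ ‖x‖ →
      C_g * ‖x‖ ^ m_ω ≤ ‖gradient ω x‖) :
    ∀ κ : ℝ, 0 < κ → ∃ C : ℝ, 0 < C ∧
      ∀ x : EuclideanSpace ℝ (Fin d), 1 ≤ ‖x‖ →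
        κ * ‖x‖ ≤ Metric.infDist x {y | ω y = 0 ∧ (gradient ω 0 = 0 → y ≠ 0)} →
        C * ‖x‖ ^ M_ω ≤ |ω x| :=
  statement3_general d M_ω m_ω hm ω hω C_ω hCω hA2 C_g hCg hA3'
end

section
/- There exists Θ₀ > 0 such that for every 0 < Θ ≤ Θ₀ the map (x_ξ, θ) ↦ x_ξ + θN_ξ is injective on the set {(x_ξ, θ) : x_ξ ∈ Σ₀, |θ| < θ_ξ}; that is, if x_{ξ₁}, x_{ξ₂} ∈ Σ₀ and |θ_i| < θ_{ξ_i} (i = 1,2) satisfy x_{ξ₁} + θ₁N_{ξ₁} = x_{ξ₂} + θ₂N_{ξ₂}, then x_{ξ₁} = x_{ξ₂} and θ₁ = θ₂. -/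
/-!
Write `⟨x⟩ = max 1 ‖x‖`, `v = x₂ - x₁` and `N = ∇ω`. If `x₁ + θ₁N(x₁) = x₂ + θ₂N(x₂)` with
`ω x₁ = ω x₂`, then `‖v‖² = θ₁ ω'(x₁) v - θ₂ ω'(x₂) v`, and by Taylor's formula at either endpoint
`|ω'(xᵢ) v| ≤ K ‖v‖²`, where `K` bounds the Hessian on the segment `[x₁, x₂]`. Hence
`‖v‖² ≤ (|θ₁| + |θ₂|) K ‖v‖²`, which forces `v = 0` once `(|θ₁| + |θ₂|) K < 1`.
With the weights of the statement, `‖θᵢ N(xᵢ)‖ ≲ Θ⟨xᵢ⟩`, so the whole segment has `⟨z⟩` comparable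
to `⟨x₁⟩`; there `K ≲ ⟨x₁⟩^(M-2)` while `|θᵢ| ≲ Θ⟨x₁⟩^(2-M)`, and the product is `≲ Θ`.
Finally `θ₁ = θ₂` because `N(x₁) ≠ 0`.
-/

open Real InnerProductSpace

section Taylor

variable {E F : Type*} [NormedAddCommGroup E] [NormedSpace ℝ E]
  [NormedAddCommGroup F] [NormedSpace ℝ F]

theorem norm_fderiv_apply_sub_le_of_eq {f : E → F} {x y : E} {K : ℝ} (hf : ContDiff ℝ 2 f)
    (hK : ∀ z ∈ segment ℝ x y, ‖iteratedFDeriv ℝ 2 f z‖ ≤ K) (hxy : f x = f y) :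
    ‖fderiv ℝ f x (y - x)‖ ≤ K * ‖y - x‖ ^ 2 := by
  have hK₀ : 0 ≤ K := (norm_nonneg _).trans (hK x (left_mem_segment ℝ x y))
  have hf' : Differentiable ℝ (fderiv ℝ f) :=
    (hf.fderiv_right (m := 1) le_rfl).differentiable one_ne_zero
  have hLip : ∀ z ∈ segment ℝ x y, ‖fderiv ℝ f z - fderiv ℝ f x‖ ≤ K * ‖y - x‖ := by
    intro z hz
    calc ‖fderiv ℝ f z - fderiv ℝ f x‖ ≤ K * ‖z - x‖ :=
          (convex_segment x y).norm_image_sub_le_of_norm_fderiv_le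
            (fun w _ => hf'.differentiableAt)
            (fun w hw => by
              rw [← norm_iteratedFDeriv_one, norm_iteratedFDeriv_fderiv]
              exact hK w hw)
            (left_mem_segment ℝ x y) hz
      _ ≤ K * ‖y - x‖ := mul_le_mul_of_nonneg_left (norm_sub_le_of_mem_segment hz) hK₀
  have hTaylor := (convex_segment x y).norm_image_sub_le_of_norm_fderiv_le'
    (fun w _ => (hf.differentiable two_ne_zero) w) hLip (left_mem_segment ℝ x y)
    (right_mem_segment ℝ x y)
  rwa [hxy, sub_self, zero_sub, norm_neg, mul_assoc, ← sq] at hTaylor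

end Taylor

section Gradient

variable {E : Type*} [NormedAddCommGroup E] [InnerProductSpace ℝ E] [CompleteSpace E]

theorem eq_of_add_smul_gradient_eq {f : E → ℝ} {x₁ x₂ : E} {θ₁ θ₂ K : ℝ} (hf : ContDiff ℝ 2 f)
    (hK : ∀ z ∈ segment ℝ x₁ x₂, ‖iteratedFDeriv ℝ 2 f z‖ ≤ K) (hθ : (|θ₁| + |θ₂|) * K < 1)
    (hf₁₂ : f x₁ = f x₂) (h : x₁ + θ₁ • gradient f x₁ = x₂ + θ₂ • gradient f x₂) : x₁ = x₂ := by
  set v := x₂ - x₁ with hv_def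
  have hv : v = θ₁ • gradient f x₁ - θ₂ • gradient f x₂ := by
    rw [hv_def, sub_eq_sub_iff_add_eq_add, ← h]
    abel
  have h₁ : |fderiv ℝ f x₁ v| ≤ K * ‖v‖ ^ 2 := norm_fderiv_apply_sub_le_of_eq hf hK hf₁₂
  have h₂ : |fderiv ℝ f x₂ v| ≤ K * ‖v‖ ^ 2 := by
    have := norm_fderiv_apply_sub_le_of_eq hf (segment_symm ℝ x₁ x₂ ▸ hK) hf₁₂.symm
    rwa [← neg_sub, map_neg, norm_neg, norm_neg] at this
  have hsq : ‖v‖ ^ 2 = θ₁ * fderiv ℝ f x₁ v - θ₂ * fderiv ℝ f x₂ v := by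
    rw [← real_inner_self_eq_norm_sq]
    nth_rw 1 [hv]
    rw [inner_sub_left, real_inner_smul_left, real_inner_smul_left, inner_gradient_left,
      inner_gradient_left]
  have hle : ‖v‖ ^ 2 ≤ (|θ₁| + |θ₂|) * K * ‖v‖ ^ 2 := by
    calc ‖v‖ ^ 2 ≤ |θ₁| * |fderiv ℝ f x₁ v| + |θ₂| * |fderiv ℝ f x₂ v| := by
          rw [hsq, ← abs_mul, ← abs_mul]
          exact (le_abs_self _).trans (abs_sub _ _)
      _ ≤ |θ₁| * (K * ‖v‖ ^ 2) + |θ₂| * (K * ‖v‖ ^ 2) := by gcongr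
      _ = (|θ₁| + |θ₂|) * K * ‖v‖ ^ 2 := by ring
  have hv0 : ‖v‖ ^ 2 = 0 := by nlinarith [sq_nonneg ‖v‖]
  rw [sq_eq_zero_iff, norm_eq_zero, hv_def, sub_eq_zero] at hv0
  exact hv0.symm

theorem norm_gradient (f : E → ℝ) (x : E) : ‖gradient f x‖ = ‖fderiv ℝ f x‖ :=
  (toDual ℝ E).symm.norm_map _

end Gradient

section Weights

variable {E : Type*} [NormedAddCommGroup E]

theorem abs_max_one_norm_sub_le (x y : E) : |max 1 ‖x‖ - max 1 ‖y‖| ≤ ‖x - y‖ := by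
  rw [max_comm, max_comm 1]
  exact (abs_max_sub_max_le_abs _ _ _).trans (abs_norm_sub_norm_le x y)

theorem rpow_le_two_rpow_abs_mul_rpow {a b : ℝ} (s : ℝ) (ha : 0 < a) (hba : b ≤ 2 * a)
    (hab : a ≤ 2 * b) : b ^ s ≤ 2 ^ |s| * a ^ s := by
  rcases le_or_gt 0 s with hs | hs
  · calc b ^ s ≤ (2 * a) ^ s := rpow_le_rpow (by linarith) hba hs
      _ = 2 ^ |s| * a ^ s := by rw [mul_rpow zero_le_two ha.le, abs_of_nonneg hs]
  · calc b ^ s ≤ (2⁻¹ * a) ^ s := rpow_le_rpow_of_nonpos (by positivity) (by linarith) hs.le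
      _ = 2 ^ |s| * a ^ s := by
        rw [mul_rpow (by norm_num) ha.le, inv_rpow zero_le_two, ← rpow_neg zero_le_two,
          abs_of_neg hs]

theorem max_one_norm_comparable_of_mem_segment [NormedSpace ℝ E] {x₁ x₂ z : E}
    (h : 8 * ‖x₂ - x₁‖ ≤ max 1 ‖x₁‖ + max 1 ‖x₂‖) (hz : z ∈ segment ℝ x₁ x₂) :
    max 1 ‖x₁‖ ≤ 2 * max 1 ‖z‖ ∧ max 1 ‖z‖ ≤ 2 * max 1 ‖x₁‖ := by
  have h₁₂ := abs_le.mp (abs_max_one_norm_sub_le x₂ x₁)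
  have hz₁ := abs_le.mp ((abs_max_one_norm_sub_le z x₁).trans (norm_sub_le_of_mem_segment hz))
  constructor <;> linarith [h₁₂.1, h₁₂.2, hz₁.1, hz₁.2, le_max_left 1 ‖z‖, le_max_left 1 ‖x₁‖]

theorem norm_smul_gradient_le [InnerProductSpace ℝ E] [CompleteSpace E] {f : E → ℝ} {x : E}
    {M C Θ θ : ℝ} (hf : ‖fderiv ℝ f x‖ ≤ C * max 1 ‖x‖ ^ (M - 1))
    (hθ : |θ| ≤ Θ * max 1 ‖x‖ ^ (2 - M)) : ‖θ • gradient f x‖ ≤ Θ * C * max 1 ‖x‖ := by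
  have hA : 0 < max 1 ‖x‖ := lt_max_of_lt_left one_pos
  calc ‖θ • gradient f x‖ ≤ Θ * max 1 ‖x‖ ^ (2 - M) * (C * max 1 ‖x‖ ^ (M - 1)) := by
        rw [norm_smul, norm_gradient, Real.norm_eq_abs]
        exact mul_le_mul hθ hf (norm_nonneg _) ((abs_nonneg θ).trans hθ)
    _ = Θ * C * (max 1 ‖x‖ ^ (2 - M) * max 1 ‖x‖ ^ (M - 1)) := by ring
    _ = Θ * C * max 1 ‖x‖ := by rw [← rpow_add hA, show 2 - M + (M - 1) = 1 by ring, rpow_one]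

theorem norm_sub_le_of_add_smul_gradient_eq [InnerProductSpace ℝ E] [CompleteSpace E]
    {f : E → ℝ} {M C Θ θ₁ θ₂ : ℝ} {x₁ x₂ : E}
    (hf₁ : ‖fderiv ℝ f x₁‖ ≤ C * max 1 ‖x₁‖ ^ (M - 1))
    (hf₂ : ‖fderiv ℝ f x₂‖ ≤ C * max 1 ‖x₂‖ ^ (M - 1))
    (hθ₁ : |θ₁| ≤ Θ * max 1 ‖x₁‖ ^ (2 - M)) (hθ₂ : |θ₂| ≤ Θ * max 1 ‖x₂‖ ^ (2 - M))
    (h : x₁ + θ₁ • gradient f x₁ = x₂ + θ₂ • gradient f x₂) :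
    ‖x₂ - x₁‖ ≤ Θ * C * (max 1 ‖x₁‖ + max 1 ‖x₂‖) := by
  have hx : x₂ - x₁ = θ₁ • gradient f x₁ - θ₂ • gradient f x₂ := by
    rw [sub_eq_sub_iff_add_eq_add, ← h]
    abel
  rw [hx, mul_add]
  exact (norm_sub_le _ _).trans
    (add_le_add (norm_smul_gradient_le hf₁ hθ₁) (norm_smul_gradient_le hf₂ hθ₂))

/- The factor `8` keeps `⟨z⟩` within a factor `2` of `⟨x₁⟩` along the segment, and `2 ^ |M - 2|`
is what such a change of `⟨z⟩` costs in the weights `⟨z⟩ ^ (± (M - 2))`. -/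
theorem eq_of_add_smul_gradient_eq_of_weighted_bounds [InnerProductSpace ℝ E] [CompleteSpace E]
    {f : E → ℝ} {M C Θ θ₁ θ₂ : ℝ} {x₁ x₂ : E} (hf : ContDiff ℝ 2 f) (hC : 0 < C)
    (hf₁ : ∀ x, ‖fderiv ℝ f x‖ ≤ C * max 1 ‖x‖ ^ (M - 1))
    (hf₂ : ∀ x, ‖iteratedFDeriv ℝ 2 f x‖ ≤ C * max 1 ‖x‖ ^ (M - 2))
    (hΘ : Θ ≤ (8 * C * (2 ^ |M - 2|) ^ 2)⁻¹)
    (hθ₁ : |θ₁| < Θ * max 1 ‖x₁‖ ^ (2 - M)) (hθ₂ : |θ₂| < Θ * max 1 ‖x₂‖ ^ (2 - M))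
    (hf₁₂ : f x₁ = f x₂) (h : x₁ + θ₁ • gradient f x₁ = x₂ + θ₂ • gradient f x₂) : x₁ = x₂ := by
  set A := max 1 ‖x₁‖
  set P : ℝ := 2 ^ |M - 2|
  have hA : 0 < A := lt_max_of_lt_left one_pos
  have hP : 1 ≤ P := one_le_rpow one_le_two (abs_nonneg _)
  have hΘC : 8 * (Θ * C) * P ^ 2 ≤ 1 := by
    have := mul_le_mul_of_nonneg_right hΘ (by positivity : (0 : ℝ) ≤ 8 * C * P ^ 2)
    rw [inv_mul_cancel₀ (by positivity)] at this
    linarith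
  have hΘ₀ : 0 < Θ := pos_of_mul_pos_left ((abs_nonneg θ₁).trans_lt hθ₁) (by positivity)
  have hclose : 8 * ‖x₂ - x₁‖ ≤ A + max 1 ‖x₂‖ := by
    have h8 : 8 * (Θ * C) ≤ 1 := by nlinarith [mul_pos hΘ₀ hC, one_le_pow₀ (n := 2) hP]
    nlinarith [norm_sub_le_of_add_smul_gradient_eq (hf₁ x₁) (hf₁ x₂) hθ₁.le hθ₂.le h,
      le_max_left 1 ‖x₂‖]
  have hcomp z (hz : z ∈ segment ℝ x₁ x₂) := max_one_norm_comparable_of_mem_segment hclose hz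
  have hK : ∀ z ∈ segment ℝ x₁ x₂, ‖iteratedFDeriv ℝ 2 f z‖ ≤ C * P * A ^ (M - 2) := by
    intro z hz
    calc ‖iteratedFDeriv ℝ 2 f z‖ ≤ C * max 1 ‖z‖ ^ (M - 2) := hf₂ z
      _ ≤ C * (P * A ^ (M - 2)) := by
        gcongr
        exact rpow_le_two_rpow_abs_mul_rpow _ hA (hcomp z hz).2 (hcomp z hz).1
      _ = C * P * A ^ (M - 2) := by ring
  have hθ₂' : |θ₂| < Θ * (P * A ^ (2 - M)) := by
    have hB := hcomp x₂ (right_mem_segment ℝ x₁ x₂)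
    calc |θ₂| < Θ * max 1 ‖x₂‖ ^ (2 - M) := hθ₂
      _ ≤ Θ * (P * A ^ (2 - M)) := by
        gcongr
        simpa only [P, abs_sub_comm M 2] using rpow_le_two_rpow_abs_mul_rpow (2 - M) hA hB.2 hB.1
  refine eq_of_add_smul_gradient_eq hf hK ?_ hf₁₂ h
  calc (|θ₁| + |θ₂|) * (C * P * A ^ (M - 2))
      < (Θ * A ^ (2 - M) + Θ * (P * A ^ (2 - M))) * (C * P * A ^ (M - 2)) := by
        gcongr
    _ = Θ * C * P * (1 + P) * (A ^ (2 - M) * A ^ (M - 2)) := by ring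
    _ = Θ * C * P * (1 + P) := by
      rw [← rpow_add hA, show 2 - M + (M - 2) = 0 by ring, rpow_zero, mul_one]
    _ < 1 := by nlinarith

end Weights

theorem statement8_general
    (d : ℕ)
    (M_ω : ℝ)
    (ω : EuclideanSpace ℝ (Fin d) → ℝ)
    (hω : ContDiff ℝ 4 ω)
    (C_ω : ℝ) (hCω : 0 < C_ω)
    (hωbd : ∀ i : ℕ, i ≤ 4 → ∀ x : EuclideanSpace ℝ (Fin d),
      ‖iteratedFDeriv ℝ i ω x‖ ≤ C_ω * (max 1 ‖x‖) ^ (M_ω - (i : ℝ)))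
    (hnocrit : ∀ x : EuclideanSpace ℝ (Fin d), ω x = 0 → x ≠ 0 → gradient ω x ≠ 0) :
    ∃ Θ₀ : ℝ, 0 < Θ₀ ∧ ∀ Θ : ℝ, 0 < Θ → Θ ≤ Θ₀ →
      ∀ xξ₁ xξ₂ : EuclideanSpace ℝ (Fin d), ω xξ₁ = 0 → xξ₁ ≠ 0 →
        ω xξ₂ = 0 → xξ₂ ≠ 0 →
        ∀ θ₁ θ₂ : ℝ,
          |θ₁| < Θ * (max 1 ‖xξ₁‖) ^ (2 - M_ω) →
          |θ₂| < Θ * (max 1 ‖xξ₂‖) ^ (2 - M_ω) →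
          xξ₁ + θ₁ • gradient ω xξ₁ = xξ₂ + θ₂ • gradient ω xξ₂ →
          xξ₁ = xξ₂ ∧ θ₁ = θ₂ := by
  have hω₁ x : ‖fderiv ℝ ω x‖ ≤ C_ω * max 1 ‖x‖ ^ (M_ω - 1) := by
    simpa using hωbd 1 (by norm_num) x
  have hω₂ x : ‖iteratedFDeriv ℝ 2 ω x‖ ≤ C_ω * max 1 ‖x‖ ^ (M_ω - 2) := by
    simpa using hωbd 2 (by norm_num) x
  refine ⟨(8 * C_ω * (2 ^ |M_ω - 2|) ^ 2)⁻¹, by positivity, ?_⟩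
  intro Θ _ hΘ x₁ x₂ hx₁ hx₁0 hx₂ _ θ₁ θ₂ hθ₁ hθ₂ h
  obtain rfl : x₁ = x₂ := eq_of_add_smul_gradient_eq_of_weighted_bounds (hω.of_le (by norm_num))
    hCω hω₁ hω₂ hΘ hθ₁ hθ₂ (hx₁.trans hx₂.symm) h
  exact ⟨rfl, smul_left_injective ℝ (hnocrit x₁ hx₁ hx₁0) (add_left_cancel h)⟩

/-- Proposition 2.2(1): for sufficiently small `Θ`, the map
`(x_ξ, θ) ↦ x_ξ + θN_ξ` is injective on `{(x_ξ, θ) : x_ξ ∈ Σ₀, |θ| < θ_ξ}`. -/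
theorem statement8
    (d : ℕ) (hd : 2 ≤ d)
    (M_ω m_ω : ℝ) (hm : m_ω ≤ M_ω - 1)
    (ω : EuclideanSpace ℝ (Fin d) → ℝ)
    (hω : ContDiff ℝ 4 ω)
    (C_ω : ℝ) (hCω : 0 < C_ω)
    (hωbd : ∀ i : ℕ, i ≤ 4 → ∀ x : EuclideanSpace ℝ (Fin d),
      ‖iteratedFDeriv ℝ i ω x‖ ≤ C_ω * (max 1 ‖x‖) ^ (M_ω - (i : ℝ)))
    (h0Sigma : ω 0 = 0)
    (hcrit0 : gradient ω 0 = 0)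
    (hhess : Function.Bijective (fderiv ℝ (gradient ω) 0))
    (hnocrit : ∀ x : EuclideanSpace ℝ (Fin d), ω x = 0 → x ≠ 0 → gradient ω x ≠ 0)
    (C_g : ℝ) (hCg : 0 < C_g)
    (hg1 : ∀ x : EuclideanSpace ℝ (Fin d), ω x = 0 → x ≠ 0 → 1 ≤ ‖x‖ →
      C_g * ‖x‖ ^ m_ω ≤ ‖gradient ω x‖)
    (hg2 : ∀ x : EuclideanSpace ℝ (Fin d), ω x = 0 → x ≠ 0 → ‖x‖ ≤ 1 →
      C_g * ‖x‖ ≤ ‖gradient ω x‖) :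
    ∃ Θ₀ : ℝ, 0 < Θ₀ ∧ ∀ Θ : ℝ, 0 < Θ → Θ ≤ Θ₀ →
      ∀ xξ₁ xξ₂ : EuclideanSpace ℝ (Fin d), ω xξ₁ = 0 → xξ₁ ≠ 0 →
        ω xξ₂ = 0 → xξ₂ ≠ 0 →
        ∀ θ₁ θ₂ : ℝ,
          |θ₁| < Θ * (max 1 ‖xξ₁‖) ^ (2 - M_ω) →
          |θ₂| < Θ * (max 1 ‖xξ₂‖) ^ (2 - M_ω) →
          xξ₁ + θ₁ • gradient ω xξ₁ = xξ₂ + θ₂ • gradient ω xξ₂ →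
          xξ₁ = xξ₂ ∧ θ₁ = θ₂ :=
  statement8_general d M_ω ω hω C_ω hCω hωbd hnocrit
end

section
/- For x_ξ ∈ Σ₀ and θ ∈ ℝ set μ_ξ(θ) := det(Id_{H_ξ} + θQ_ξ), where H_ξ := {v ∈ ℝ^d : ⟨v, N_ξ⟩ = 0}, P_ξ is the orthogonal projection onto H_ξ, and Q_ξ : H_ξ → H_ξ is v ↦ P_ξ(Hess ω(x_ξ) v). Then θ ↦ μ_ξ(θ) is a polynomial of degree at most d − 1 with μ_ξ(0) = 1, and there exist Θ₀ > 0 and C > 0 such that for every 0 < Θ ≤ Θ₀, every x_ξ ∈ Σ₀, every |θ| < θ_ξ, and every 0 ≤ p ≤ d − 1: μ_ξ(θ) ≥ C⁻¹ > 0 and |d^p μ_ξ/dθ^p (θ)| ≤ C⟨x_ξ⟩^{p(M_ω−2)}. -/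
/-!
In an orthonormal basis of `∇ω(x_ξ)ᗮ` we have `μ_ξ(θ) = det (1 + θ M)`, whose entries are bounded by
`K := ‖D²ω(x_ξ)‖ ≲ ⟨x_ξ⟩^(M_ω - 2)`. The `k`-th coefficient of `det (1 + X M)` is the sum of the
principal `k × k` minors of `M`, hence is at most `(d - 1)! K ^ k`. So as long as `|θ| K` is small,
`μ_ξ(θ)` stays within `1/2` of its constant term `1`, and its `p`-th derivative is `O(K ^ p)`;
the condition `|θ| < Θ ⟨x_ξ⟩^(2 - M_ω)` is exactly `|θ| K ≲ Θ`.
-/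

open Polynomial
open scoped Nat

theorem Nat.descFactorial_le_factorial (n k : ℕ) : n.descFactorial k ≤ n ! := by
  rcases le_or_gt k n with hk | hk
  · exact (Nat.factorial_mul_descFactorial hk).symm ▸ Nat.le_mul_of_pos_left _ (Nat.factorial_pos _)
  · simp [Nat.descFactorial_eq_zero_iff_lt.mpr hk]

theorem one_le_two_mul_succ_mul_factorial (n : ℕ) : (1 : ℝ) ≤ 2 * ((n + 1) * n !) := by
  have : (1 : ℝ) ≤ n ! := Nat.one_le_cast.mpr (Nat.factorial_pos n)
  nlinarith [Nat.cast_nonneg (α := ℝ) n]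

namespace Polynomial

theorem iteratedDeriv_eval {𝕜 : Type*} [NontriviallyNormedField 𝕜] (P : 𝕜[X]) (p : ℕ) :
    iteratedDeriv p (fun x => P.eval x) = fun x => (derivative^[p] P).eval x := by
  induction p with
  | zero => simp
  | succ p ih =>
    rw [iteratedDeriv_succ, ih, Function.iterate_succ_apply']
    funext x
    exact Polynomial.deriv _

variable {P : ℝ[X]} {n : ℕ} {A K θ : ℝ}

theorem abs_eval_le_of_abs_coeff_le (hdeg : P.natDegree ≤ n) (hK : 0 ≤ K)
    (hcoeff : ∀ k, |P.coeff k| ≤ A * K ^ k) (hθ : |θ| * K ≤ 1) :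
    |P.eval θ| ≤ (n + 1) * A := by
  have hA : 0 ≤ A := by simpa using (abs_nonneg _).trans (hcoeff 0)
  rw [eval_eq_sum_range' (Nat.lt_succ_of_le hdeg)]
  calc _ ≤ ∑ k ∈ Finset.range (n + 1), |P.coeff k * θ ^ k| := Finset.abs_sum_le_sum_abs _ _
    _ ≤ ∑ k ∈ Finset.range (n + 1), A := Finset.sum_le_sum fun k _ => ?_
    _ = (n + 1) * A := by simp
  calc |P.coeff k * θ ^ k| ≤ A * K ^ k * |θ| ^ k := by
        rw [abs_mul, abs_pow]; gcongr; exact hcoeff k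
    _ = A * (|θ| * K) ^ k := by ring
    _ ≤ A := mul_le_of_le_one_right hA (pow_le_one₀ (by positivity) hθ)

theorem abs_eval_sub_coeff_zero_le (hdeg : P.natDegree ≤ n) (hK : 0 ≤ K)
    (hcoeff : ∀ k, |P.coeff k| ≤ A * K ^ k) (hθ : |θ| * K ≤ 1) :
    |P.eval θ - P.coeff 0| ≤ (n + 1) * (A * K) * |θ| := by
  have hdivX : P.eval θ - P.coeff 0 = P.divX.eval θ * θ := by
    conv_lhs => rw [← divX_mul_X_add P]
    simp
  rw [hdivX, abs_mul]
  gcongr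
  refine abs_eval_le_of_abs_coeff_le (natDegree_divX_le.trans hdeg) hK (fun k => ?_) hθ
  rw [coeff_divX, mul_assoc, ← pow_succ']
  exact hcoeff (k + 1)

theorem abs_iteratedDeriv_eval_le (hdeg : P.natDegree ≤ n) (hK : 0 ≤ K)
    (hcoeff : ∀ k, |P.coeff k| ≤ A * K ^ k) (hθ : |θ| * K ≤ 1) (p : ℕ) :
    |iteratedDeriv p (fun x => P.eval x) θ| ≤ (n + 1) * (n ! * A * K ^ p) := by
  have hA : 0 ≤ A := by simpa using (abs_nonneg _).trans (hcoeff 0)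
  rw [iteratedDeriv_eval]
  refine abs_eval_le_of_abs_coeff_le ((natDegree_iterate_derivative P p).trans (by omega)) hK
    (fun j => ?_) hθ
  rw [coeff_iterate_derivative, nsmul_eq_mul, abs_mul, Nat.abs_cast]
  rcases le_or_gt (j + p) n with h | h
  · calc _ ≤ (n ! : ℝ) * (A * K ^ (j + p)) := by
          gcongr
          · exact_mod_cast (Nat.descFactorial_le p h).trans (Nat.descFactorial_le_factorial n p)
          · exact hcoeff _
      _ = n ! * A * K ^ p * K ^ j := by ring
  · rw [coeff_eq_zero_of_natDegree_lt (hdeg.trans_lt h), abs_zero, mul_zero]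
    positivity

end Polynomial

namespace Matrix

variable {ι R : Type*} [Fintype ι] [DecidableEq ι] [CommRing R]

theorem eval_det_one_add_X_smul (M : Matrix ι ι R) (θ : R) :
    (det (1 + (X : R[X]) • M.map C)).eval θ = det (1 + θ • M) := by
  rw [← coe_evalRingHom, RingHom.map_det]
  congr 1
  ext i j
  rw [RingHom.mapMatrix_apply, map_apply, add_apply, add_apply, smul_apply, smul_apply, map_apply]
  simp only [coe_evalRingHom, eval_add, smul_eq_mul, eval_mul, eval_X, eval_C, one_apply]
  split_ifs <;> simp

theorem natDegree_det_one_add_X_smul_le (M : Matrix ι ι R) :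
    (det (1 + (X : R[X]) • M.map C)).natDegree ≤ Fintype.card ι := by
  simpa [add_comm] using natDegree_det_X_add_C_le M 1

theorem abs_coeff_det_one_add_X_smul_le {M : Matrix ι ι ℝ} {K : ℝ} (hK : 0 ≤ K)
    (hM : ∀ i j, |M i j| ≤ K) (k : ℕ) :
    |(det (1 + (X : ℝ[X]) • M.map C)).coeff k| ≤ (Fintype.card ι)! * K ^ k := by
  rw [coeff_det_one_add_X_smul_eq_sum_minors]
  calc _ ≤ ∑ s ∈ Finset.univ.powersetCard k,
        |(M.submatrix (Subtype.val : s → ι) (Subtype.val : s → ι)).det| :=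
        Finset.abs_sum_le_sum_abs _ _
    _ ≤ ∑ s ∈ (Finset.univ : Finset ι).powersetCard k, (k ! : ℝ) * K ^ k := by
        refine Finset.sum_le_sum fun s hs => ?_
        simpa [(Finset.mem_powersetCard.mp hs).2] using
          det_le (abv := AbsoluteValue.abs) (A := M.submatrix (Subtype.val : s → ι) Subtype.val)
            fun i j => hM _ _
    _ = (Fintype.card ι).descFactorial k * K ^ k := by
        rw [Finset.sum_const, Finset.card_powersetCard, Finset.card_univ, nsmul_eq_mul,
          Nat.descFactorial_eq_factorial_mul_choose]
        push_cast
        ring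
    _ ≤ (Fintype.card ι)! * K ^ k := by
        gcongr
        exact_mod_cast Nat.descFactorial_le_factorial _ _

end Matrix

open Module

section InnerProductSpace

variable {E : Type*} [NormedAddCommGroup E] [InnerProductSpace ℝ E]

namespace LinearMap

variable {Q : E →ₗ[ℝ] E} {K : ℝ}

theorem abs_toMatrix_orthonormalBasis_apply_le {ι : Type*} [Fintype ι] [DecidableEq ι]
    (b : OrthonormalBasis ι ℝ E) (hQ : ∀ v, ‖Q v‖ ≤ K * ‖v‖) (i j : ι) :
    |toMatrix b.toBasis b.toBasis Q i j| ≤ K := by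
  rw [toMatrix_apply, OrthonormalBasis.coe_toBasis_repr_apply, OrthonormalBasis.coe_toBasis]
  calc _ ≤ ‖b.repr (Q (b j))‖ := PiLp.norm_apply_le _ i
    _ = ‖Q (b j)‖ := b.repr.norm_map _
    _ ≤ K := by simpa [b.orthonormal.1 j] using hQ (b j)

variable [FiniteDimensional ℝ E]

theorem exists_poly_det_id_add_smul (hK : 0 ≤ K) (hQ : ∀ v, ‖Q v‖ ≤ K * ‖v‖) :
    ∃ P : ℝ[X], P.natDegree ≤ finrank ℝ E ∧ (∀ θ : ℝ, LinearMap.det (id + θ • Q) = P.eval θ) ∧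
      ∀ k, |P.coeff k| ≤ (finrank ℝ E)! * K ^ k := by
  let b := stdOrthonormalBasis ℝ E
  let M := toMatrix b.toBasis b.toBasis Q
  refine ⟨(1 + (X : ℝ[X]) • M.map C).det, ?_, fun θ => ?_, fun k => ?_⟩
  · simpa using M.natDegree_det_one_add_X_smul_le
  · rw [Matrix.eval_det_one_add_X_smul, ← det_toMatrix b.toBasis, map_add, map_smul, toMatrix_id]
  · simpa using
      Matrix.abs_coeff_det_one_add_X_smul_le hK (abs_toMatrix_orthonormalBasis_apply_le b hQ) k

theorem one_half_le_det_id_add_smul (hK : 0 ≤ K) (hQ : ∀ v, ‖Q v‖ ≤ K * ‖v‖) {θ : ℝ}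
    (hθ : |θ| * K ≤ (2 * (((finrank ℝ E : ℝ) + 1) * (finrank ℝ E)!))⁻¹) :
    1 / 2 ≤ LinearMap.det (id + θ • Q) := by
  set c : ℝ := 2 * (((finrank ℝ E : ℝ) + 1) * (finrank ℝ E)!)
  have hc : 1 ≤ c := one_le_two_mul_succ_mul_factorial _
  obtain ⟨P, hdeg, heval, hcoeff⟩ := exists_poly_det_id_add_smul hK hQ
  have hP0 : P.coeff 0 = 1 := by
    rw [coeff_zero_eq_eval_zero, ← heval, zero_smul, add_zero, det_id]
  have hclose := abs_eval_sub_coeff_zero_le hdeg hK hcoeff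
    (hθ.trans (inv_le_one_of_one_le₀ hc))
  have hsmall : ((finrank ℝ E : ℝ) + 1) * ((finrank ℝ E)! * K) * |θ| ≤ 1 / 2 :=
    calc _ = c * (|θ| * K) / 2 := by ring
      _ ≤ c * c⁻¹ / 2 := by gcongr
      _ = 1 / 2 := by field_simp
  rw [heval, ← hP0]
  linarith [abs_le.mp hclose]

theorem abs_iteratedDeriv_det_id_add_smul_le (hK : 0 ≤ K) (hQ : ∀ v, ‖Q v‖ ≤ K * ‖v‖) {θ : ℝ}
    (hθ : |θ| * K ≤ 1) (p : ℕ) :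
    |iteratedDeriv p (fun t : ℝ => LinearMap.det (id + t • Q)) θ| ≤
      ((finrank ℝ E : ℝ) + 1) * ((finrank ℝ E)! * (finrank ℝ E)! * K ^ p) := by
  obtain ⟨P, hdeg, heval, hcoeff⟩ := exists_poly_det_id_add_smul hK hQ
  simpa only [heval] using abs_iteratedDeriv_eval_le hdeg hK hcoeff hθ p

end LinearMap

theorem norm_fderiv_gradient [CompleteSpace E] (f : E → ℝ) (x : E) :
    ‖fderiv ℝ (gradient f) x‖ = ‖iteratedFDeriv ℝ 2 f x‖ := by
  have : gradient f = (InnerProductSpace.toDual ℝ E).symm ∘ fderiv ℝ f := rfl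
  rw [this, LinearIsometryEquiv.comp_fderiv]
  calc _ = ‖fderiv ℝ (fderiv ℝ f) x‖ :=
        (InnerProductSpace.toDual ℝ E).symm.toLinearIsometry.norm_toContinuousLinearMap_comp
    _ = ‖iteratedFDeriv ℝ 2 f x‖ := by
        rw [← norm_iteratedFDeriv_zero (𝕜 := ℝ) (f := fderiv ℝ (fderiv ℝ f)),
          norm_iteratedFDeriv_fderiv, norm_iteratedFDeriv_fderiv]

section tangentHessian

variable [CompleteSpace E]

/-- The paper's `Q_ξ`, for `x = x_ξ`. -/
noncomputable def tangentHessian (f : E → ℝ) (x : E) :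
    (ℝ ∙ gradient f x)ᗮ →ₗ[ℝ] (ℝ ∙ gradient f x)ᗮ :=
  (ℝ ∙ gradient f x)ᗮ.orthogonalProjectionOnto.toLinearMap ∘ₗ
    (fderiv ℝ (gradient f) x).toLinearMap ∘ₗ (ℝ ∙ gradient f x)ᗮ.subtype

theorem norm_tangentHessian_apply_le (f : E → ℝ) (x : E) (v : (ℝ ∙ gradient f x)ᗮ) :
    ‖tangentHessian f x v‖ ≤ ‖iteratedFDeriv ℝ 2 f x‖ * ‖v‖ := by
  rw [← norm_fderiv_gradient]
  calc _ ≤ ‖fderiv ℝ (gradient f) x v‖ := Submodule.norm_orthogonalProjectionOnto_apply_le _ _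
    _ ≤ _ := (fderiv ℝ (gradient f) x).le_opNorm v

end tangentHessian

theorem Submodule.finrank_orthogonal_span_singleton_eq [FiniteDimensional ℝ E] {v : E}
    (hv : v ≠ 0) : finrank ℝ (ℝ ∙ v)ᗮ = finrank ℝ E - 1 := by
  have := Submodule.finrank_add_finrank_orthogonal (ℝ ∙ v)
  rw [finrank_span_singleton hv] at this
  omega

end InnerProductSpace

theorem abs_mul_le_of_abs_lt_mul_rpow {θ Θ B r a : ℝ} (hr : 0 < r) (hB : 0 ≤ B)
    (hθ : |θ| < Θ * r ^ (2 - a)) : |θ| * (B * r ^ (a - 2)) ≤ Θ * B := by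
  calc _ ≤ Θ * r ^ (2 - a) * (B * r ^ (a - 2)) := by gcongr
    _ = Θ * B := by rw [mul_mul_mul_comm, ← Real.rpow_add hr]; simp

theorem pow_mul_rpow_le {B r a : ℝ} {p n : ℕ} (hB : 1 ≤ B) (hr : 0 < r) (hp : p ≤ n) :
    (B * r ^ a) ^ p ≤ B ^ n * r ^ (p * a) := by
  rw [mul_pow, ← Real.rpow_natCast (r ^ a), ← Real.rpow_mul hr.le, mul_comm a]
  gcongr

theorem statement11_general
    (d : ℕ)
    (M_ω : ℝ)
    (ω : EuclideanSpace ℝ (Fin d) → ℝ)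
    (C_ω : ℝ)
    (hωbd : ∀ i : ℕ, i ≤ 4 → ∀ x : EuclideanSpace ℝ (Fin d),
      ‖iteratedFDeriv ℝ i ω x‖ ≤ C_ω * (max 1 ‖x‖) ^ (M_ω - (i : ℝ)))
    (hnocrit : ∀ x : EuclideanSpace ℝ (Fin d), ω x = 0 → x ≠ 0 → gradient ω x ≠ 0) :
    ∀ μ : EuclideanSpace ℝ (Fin d) → ℝ → ℝ,
      (∀ xξ θ, μ xξ θ = LinearMap.det
        (LinearMap.id +
          θ • ((Submodule.orthogonalProjectionOnto (Submodule.span ℝ {gradient ω xξ})ᗮ).toLinearMap ∘ₗ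
            (fderiv ℝ (gradient ω) xξ).toLinearMap ∘ₗ
            (Submodule.span ℝ {gradient ω xξ})ᗮ.subtype))) →
      (∀ xξ : EuclideanSpace ℝ (Fin d), ω xξ = 0 → xξ ≠ 0 →
        μ xξ 0 = 1 ∧
        ∃ P : Polynomial ℝ, P.natDegree ≤ d - 1 ∧ ∀ θ : ℝ, μ xξ θ = P.eval θ) ∧
      ∃ Θ₀ C : ℝ, 0 < Θ₀ ∧ 0 < C ∧ ∀ Θ : ℝ, 0 < Θ → Θ ≤ Θ₀ →
        ∀ xξ : EuclideanSpace ℝ (Fin d), ω xξ = 0 → xξ ≠ 0 →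
          ∀ θ : ℝ, |θ| < Θ * (max 1 ‖xξ‖) ^ (2 - M_ω) →
            C⁻¹ ≤ μ xξ θ ∧
            ∀ p : ℕ, p ≤ d - 1 →
              |iteratedDeriv p (μ xξ) θ| ≤
                C * (max 1 ‖xξ‖) ^ ((p : ℝ) * (M_ω - 2)) := by
  intro μ hμ
  set n := d - 1
  set B := max 1 C_ω
  have hB : 1 ≤ B := le_max_left _ _
  have hr : ∀ x : EuclideanSpace ℝ (Fin d), 0 < max 1 ‖x‖ := fun x => by positivity
  have hQ : ∀ x v, ‖tangentHessian ω x v‖ ≤ B * max 1 ‖x‖ ^ (M_ω - 2) * ‖v‖ := fun x v => by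
    have hHess : ‖iteratedFDeriv ℝ 2 ω x‖ ≤ B * max 1 ‖x‖ ^ (M_ω - 2) := by
      simpa using (hωbd 2 (by norm_num) x).trans
        (mul_le_mul_of_nonneg_right (le_max_right 1 C_ω) (by positivity))
    exact (norm_tangentHessian_apply_le ω x v).trans (by gcongr)
  have hdim : ∀ x, ω x = 0 → x ≠ 0 → finrank ℝ (ℝ ∙ gradient ω x)ᗮ = n := fun x h0 hx => by
    rw [Submodule.finrank_orthogonal_span_singleton_eq (hnocrit x h0 hx), finrank_euclideanSpace_fin]
  refine ⟨fun x h0 hx => ⟨by simp [hμ], ?_⟩, (2 * ((n + 1) * n !) * B)⁻¹,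
    max 2 ((n + 1) * (n ! * n ! * B ^ n)), by positivity, by positivity,
    fun Θ hΘ hΘ₀ x h0 hx θ hθ => ?_⟩
  · obtain ⟨P, hdeg, heval, -⟩ := LinearMap.exists_poly_det_id_add_smul (by positivity) (hQ x)
    exact ⟨P, hdim x h0 hx ▸ hdeg, fun θ => (hμ x θ).trans (heval θ)⟩
  have hK : 0 ≤ B * max 1 ‖x‖ ^ (M_ω - 2) := by positivity
  have hθK : |θ| * (B * max 1 ‖x‖ ^ (M_ω - 2)) ≤ (2 * (((n : ℝ) + 1) * n !))⁻¹ :=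
    calc _ ≤ Θ * B := abs_mul_le_of_abs_lt_mul_rpow (hr x) (by positivity) hθ
      _ ≤ (2 * ((n + 1) * n !) * B)⁻¹ * B := by gcongr
      _ = _ := by field_simp
  rw [show μ x = fun t => LinearMap.det (LinearMap.id + t • tangentHessian ω x) from funext (hμ x)]
  have hθ1 := hθK.trans (inv_le_one_of_one_le₀ (one_le_two_mul_succ_mul_factorial n))
  rw [← hdim x h0 hx] at hθK
  refine ⟨?_, fun p hp => ?_⟩
  · calc _ ≤ (2 : ℝ)⁻¹ := inv_anti₀ two_pos (le_max_left _ _)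
      _ ≤ _ := by simpa using LinearMap.one_half_le_det_id_add_smul hK (hQ x) hθK
  · calc _ ≤ (n + 1) * (n ! * n ! * (B * max 1 ‖x‖ ^ (M_ω - 2)) ^ p) := by
          simpa only [hdim x h0 hx] using
            LinearMap.abs_iteratedDeriv_det_id_add_smul_le hK (hQ x) hθ1 p
      _ ≤ (n + 1) * (n ! * n ! * (B ^ n * max 1 ‖x‖ ^ (p * (M_ω - 2)))) := by
          gcongr
          exact pow_mul_rpow_le hB (hr x) hp
      _ = (n + 1) * (n ! * n ! * B ^ n) * max 1 ‖x‖ ^ (p * (M_ω - 2)) := by ring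
      _ ≤ _ := by gcongr; exact le_max_right _ _

/-- Properties of the density `μ_ξ(θ) = det(Id + θQ_ξ)`: it is a polynomial
in `θ` of degree at most `d - 1` with `μ_ξ(0) = 1`, and for sufficiently
small `Θ` it is bounded below by `C⁻¹ > 0` on `|θ| < θ_ξ`, with derivative
bounds `|dᵖμ_ξ/dθᵖ| ≤ C⟨x_ξ⟩^{p(M_ω - 2)}` for `0 ≤ p ≤ d - 1`. -/
theorem statement11
    (d : ℕ) (hd : 2 ≤ d)
    (M_ω m_ω : ℝ) (hm : m_ω ≤ M_ω - 1)
    (ω : EuclideanSpace ℝ (Fin d) → ℝ)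
    (hω : ContDiff ℝ 4 ω)
    (C_ω : ℝ) (hCω : 0 < C_ω)
    (hωbd : ∀ i : ℕ, i ≤ 4 → ∀ x : EuclideanSpace ℝ (Fin d),
      ‖iteratedFDeriv ℝ i ω x‖ ≤ C_ω * (max 1 ‖x‖) ^ (M_ω - (i : ℝ)))
    (h0Sigma : ω 0 = 0)
    (hcrit0 : gradient ω 0 = 0)
    (hhess : Function.Bijective (fderiv ℝ (gradient ω) 0))
    (hnocrit : ∀ x : EuclideanSpace ℝ (Fin d), ω x = 0 → x ≠ 0 → gradient ω x ≠ 0)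
    (C_g : ℝ) (hCg : 0 < C_g)
    (hg1 : ∀ x : EuclideanSpace ℝ (Fin d), ω x = 0 → x ≠ 0 → 1 ≤ ‖x‖ →
      C_g * ‖x‖ ^ m_ω ≤ ‖gradient ω x‖)
    (hg2 : ∀ x : EuclideanSpace ℝ (Fin d), ω x = 0 → x ≠ 0 → ‖x‖ ≤ 1 →
      C_g * ‖x‖ ≤ ‖gradient ω x‖) :
    ∀ μ : EuclideanSpace ℝ (Fin d) → ℝ → ℝ,
      (∀ xξ θ, μ xξ θ = LinearMap.det
        (LinearMap.id +
          θ • ((Submodule.orthogonalProjectionOnto (Submodule.span ℝ {gradient ω xξ})ᗮ).toLinearMap ∘ₗ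
            (fderiv ℝ (gradient ω) xξ).toLinearMap ∘ₗ
            (Submodule.span ℝ {gradient ω xξ})ᗮ.subtype))) →
      (∀ xξ : EuclideanSpace ℝ (Fin d), ω xξ = 0 → xξ ≠ 0 →
        μ xξ 0 = 1 ∧
        ∃ P : Polynomial ℝ, P.natDegree ≤ d - 1 ∧ ∀ θ : ℝ, μ xξ θ = P.eval θ) ∧
      ∃ Θ₀ C : ℝ, 0 < Θ₀ ∧ 0 < C ∧ ∀ Θ : ℝ, 0 < Θ → Θ ≤ Θ₀ →
        ∀ xξ : EuclideanSpace ℝ (Fin d), ω xξ = 0 → xξ ≠ 0 →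
          ∀ θ : ℝ, |θ| < Θ * (max 1 ‖xξ‖) ^ (2 - M_ω) →
            C⁻¹ ≤ μ xξ θ ∧
            ∀ p : ℕ, p ≤ d - 1 →
              |iteratedDeriv p (μ xξ) θ| ≤
                C * (max 1 ‖xξ‖) ^ ((p : ℝ) * (M_ω - 2)) :=
  statement11_general d M_ω ω C_ω hωbd hnocrit
end

section
/- Let n ∈ ℝ with n ≤ d − 1. Then there is a constant C > 0, independent of δ, such that for every 0 < δ ≤ 1/2, ∫_{Σ₀ ∩ (B₁ ∖ B_δ)} |x|^{−n} d_Σ x ≤ C·χ_{d,n+1}(δ), where χ_{d,n+1}(δ) = 1 if n + 1 ≠ d and χ_{d,n+1}(δ) = |ln δ| if n + 1 = d, and B_r denotes the closed ball of radius r centred at 0. -/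
/-!
Decompose `B₁ ∖ B_δ` into the dyadic annuli `B_{2^{-k}} ∖ B_{2^{-k-1}}`, `k < ⌈log₂ δ⁻¹⌉`.
On the annulus of radius `r`, the lower bound `|∇ω(x)| ≥ C|x|` together with the Lipschitz
bound on `∇ω` makes `Σ₀` flat at scale `εr` for a fixed `ε`: after cutting the annulus into a
bounded number of balls of radius `εr`, each piece is a `2`-Lipschitz graph over the hyperplane
`∇ω(x₀)^⊥`, hence has `(d-1)`-dimensional measure `O(r^{d-1})`. Since `|x|^{-n} ≈ r^{-n}` there,
the `k`-th annulus contributes `O(2^{k(n+1-d)})`, and summing over `k` gives a bounded geometric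
series when `n + 1 < d` and `O(|log δ|)` terms of size `O(1)` when `n + 1 = d`.
-/

open MeasureTheory Metric Set Module
open scoped ENNReal NNReal RealInnerProductSpace

theorem setLIntegral_biUnion_finset_le {α ι : Type*} [MeasurableSpace α] (μ : Measure α)
    (s : Finset ι) (t : ι → Set α) (f : α → ℝ≥0∞) :
    ∫⁻ x in ⋃ i ∈ s, t i, f x ∂μ ≤ ∑ i ∈ s, ∫⁻ x in t i, f x ∂μ := by
  classical
  induction s using Finset.induction_on with
  | empty => simp
  | insert i s hi ih =>
    rw [Finset.set_biUnion_insert, Finset.sum_insert hi]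
    exact (lintegral_union_le _ _ _).trans (by gcongr)

theorem hausdorffMeasure_le_of_dist_le_mul {X Y : Type*} [MetricSpace X] [MeasurableSpace X]
    [BorelSpace X] [MetricSpace Y] [MeasurableSpace Y] [BorelSpace Y] {f : X → Y} {K : ℝ≥0}
    {s : Set X} (hf : ∀ x ∈ s, ∀ y ∈ s, dist x y ≤ K * dist (f x) (f y)) {d : ℝ} (hd : 0 ≤ d) :
    μH[d] s ≤ (K : ℝ≥0∞) ^ d * μH[d] (f '' s) := by
  have hanti : AntilipschitzWith K (s.domRestrict f) :=
    AntilipschitzWith.of_le_mul_dist fun x y => hf x x.2 y y.2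
  calc μH[d] s = μH[d] (univ : Set s) := by
        rw [← (isometry_subtype_coe (s := s)).hausdorffMeasure_image (Or.inl hd), image_univ,
          Subtype.range_coe]
    _ ≤ (K : ℝ≥0∞) ^ d * μH[d] (s.domRestrict f '' univ) := hanti.le_hausdorffMeasure_image hd _
    _ = (K : ℝ≥0∞) ^ d * μH[d] (f '' s) := by rw [image_univ, range_domRestrict]

theorem rpow_neg_le_two_rpow_abs_mul {r t : ℝ} (n : ℝ) (hr : 0 < r) (hrt : r / 2 < t)
    (htr : t ≤ r) : t ^ (-n) ≤ 2 ^ |n| * r ^ (-n) := by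
  rcases le_total 0 n with hn | hn
  · calc t ^ (-n) ≤ (r / 2) ^ (-n) :=
          Real.rpow_le_rpow_of_nonpos (by positivity) hrt.le (by linarith)
      _ = 2 ^ |n| * r ^ (-n) := by
        rw [Real.div_rpow hr.le zero_le_two, Real.rpow_neg zero_le_two, abs_of_nonneg hn]
        field_simp
  · calc t ^ (-n) ≤ r ^ (-n) := Real.rpow_le_rpow (by linarith) htr (by linarith)
      _ ≤ 2 ^ |n| * r ^ (-n) :=
        le_mul_of_one_le_left (by positivity) (Real.one_le_rpow one_le_two (abs_nonneg n))

theorem natCeil_neg_logb_two_le {δ : ℝ} (hδ : 0 < δ) (hδ2 : δ ≤ 1 / 2) :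
    (⌈-Real.logb 2 δ⌉₊ : ℝ) ≤ 2 / Real.log 2 * |Real.log δ| := by
  have hlog2 : 0 < Real.log 2 := Real.log_pos one_lt_two
  have hlogδ : Real.log 2 ≤ -Real.log δ := by
    have := Real.log_le_log hδ hδ2
    rw [one_div, Real.log_inv] at this
    linarith
  have hs : -Real.logb 2 δ = -Real.log δ / Real.log 2 := by rw [Real.logb, neg_div]
  have hs1 : 1 ≤ -Real.logb 2 δ := by rwa [hs, le_div_iff₀ hlog2, one_mul]
  calc (⌈-Real.logb 2 δ⌉₊ : ℝ) ≤ -Real.logb 2 δ + 1 := (Nat.ceil_lt_add_one (by linarith)).le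
    _ ≤ 2 * -Real.logb 2 δ := by linarith
    _ = 2 / Real.log 2 * |Real.log δ| := by
      rw [hs, abs_of_nonpos (by linarith)]
      ring

section Annuli

variable {E : Type*} [NormedAddCommGroup E]

theorem mem_closedBall_diff_closedBall_zero_iff {x : E} {r R : ℝ} :
    x ∈ closedBall 0 R \ closedBall 0 r ↔ r < ‖x‖ ∧ ‖x‖ ≤ R := by
  simp only [mem_sdiff, mem_closedBall_zero_iff, not_le, and_comm]

theorem closedBall_diff_closedBall_subset_biUnion_dyadic {δ : ℝ} (hδ : 0 < δ) :
    closedBall (0 : E) 1 \ closedBall 0 δ ⊆ ⋃ k ∈ Finset.range ⌈-Real.logb 2 δ⌉₊,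
      closedBall 0 ((2 : ℝ) ^ (-(k : ℝ))) \ closedBall 0 ((2 : ℝ) ^ (-(k : ℝ)) / 2) := by
  intro x hx
  rw [mem_closedBall_diff_closedBall_zero_iff] at hx
  have hx0 : 0 < ‖x‖ := hδ.trans hx.1
  set t := -Real.logb 2 ‖x‖
  have ht0 : 0 ≤ t := neg_nonneg.2 (Real.logb_nonpos one_lt_two hx0.le hx.2)
  have hxt : ‖x‖ = 2 ^ (-t) := by rw [neg_neg, Real.rpow_logb two_pos one_lt_two.ne' hx0]
  have htδ : t < -Real.logb 2 δ := neg_lt_neg (Real.logb_lt_logb one_lt_two hδ hx.1)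
  refine mem_iUnion₂.2 ⟨⌊t⌋₊, Finset.mem_range.2 (Nat.lt_ceil.2 ((Nat.floor_le ht0).trans_lt htδ)),
    mem_closedBall_diff_closedBall_zero_iff.2 ⟨?_, ?_⟩⟩
  · rw [hxt, ← Real.rpow_sub_one two_ne_zero]
    exact Real.rpow_lt_rpow_of_exponent_lt one_lt_two (by linarith [Nat.lt_floor_add_one t])
  · rw [hxt]
    exact Real.rpow_le_rpow_of_exponent_le one_le_two (neg_le_neg (Nat.floor_le ht0))

theorem exists_finset_closedBall_subset_biUnion_ball [NormedSpace ℝ E] [ProperSpace E] {ε : ℝ}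
    (hε : 0 < ε) : ∃ t : Finset E, ∀ r > 0, closedBall (0 : E) r ⊆ ⋃ a ∈ t, ball (r • a) (ε * r) := by
  obtain ⟨t, -, htf, ht⟩ := finite_cover_balls_of_compact (isCompact_closedBall (0 : E) 1) hε
  refine ⟨htf.toFinset, fun r hr x hx => ?_⟩
  have hx' : r⁻¹ • x ∈ closedBall (0 : E) 1 := by
    rw [mem_closedBall_zero_iff, norm_smul, norm_inv, Real.norm_of_nonneg hr.le]
    exact inv_mul_le_one_of_le₀ (mem_closedBall_zero_iff.1 hx) hr.le
  obtain ⟨a, ha, hxa⟩ := mem_iUnion₂.1 (ht hx')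
  refine mem_iUnion₂.2 ⟨a, htf.mem_toFinset.2 ha, ?_⟩
  rw [mem_ball, ← smul_inv_smul₀ hr.ne' x, dist_smul₀, Real.norm_of_nonneg hr.le, mul_comm ε]
  exact mul_lt_mul_of_pos_left hxa hr

variable [MeasurableSpace E] {μ : Measure E} {S : Set E} {A m n : ℝ}

theorem setLIntegral_inter_annulus_rpow_neg_le {r : ℝ} (hr : 0 < r)
    (hμ : μ (S ∩ (closedBall 0 r \ closedBall 0 (r / 2))) ≤ ENNReal.ofReal (A * r ^ m)) :
    ∫⁻ x in S ∩ (closedBall 0 r \ closedBall 0 (r / 2)), ENNReal.ofReal (‖x‖ ^ (-n)) ∂μ ≤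
      ENNReal.ofReal (2 ^ |n| * A * r ^ (m - n)) := by
  calc ∫⁻ x in S ∩ (closedBall 0 r \ closedBall 0 (r / 2)), ENNReal.ofReal (‖x‖ ^ (-n)) ∂μ
      ≤ ∫⁻ _ in S ∩ (closedBall 0 r \ closedBall 0 (r / 2)),
          ENNReal.ofReal (2 ^ |n| * r ^ (-n)) ∂μ := by
        refine setLIntegral_mono measurable_const fun x hx => ENNReal.ofReal_le_ofReal ?_
        obtain ⟨hxr, hxR⟩ := mem_closedBall_diff_closedBall_zero_iff.1 hx.2
        exact rpow_neg_le_two_rpow_abs_mul n hr hxr hxR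
    _ ≤ ENNReal.ofReal (2 ^ |n| * r ^ (-n)) * ENNReal.ofReal (A * r ^ m) := by
        rw [setLIntegral_const]
        gcongr
    _ = ENNReal.ofReal (2 ^ |n| * A * r ^ (m - n)) := by
        rw [← ENNReal.ofReal_mul (by positivity), Real.rpow_sub hr, Real.rpow_neg hr.le]
        congr 1
        field_simp

theorem setLIntegral_inter_annulus_le_geom_sum (hA : 0 ≤ A)
    (hshell : ∀ r, 0 < r → r ≤ 1 →
      μ (S ∩ (closedBall 0 r \ closedBall 0 (r / 2))) ≤ ENNReal.ofReal (A * r ^ m))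
    {δ : ℝ} (hδ : 0 < δ) :
    ∫⁻ x in S ∩ (closedBall 0 1 \ closedBall 0 δ), ENNReal.ofReal (‖x‖ ^ (-n)) ∂μ ≤
      ENNReal.ofReal (2 ^ |n| * A * ∑ k ∈ Finset.range ⌈-Real.logb 2 δ⌉₊,
        ((2 : ℝ) ^ (n - m)) ^ k) := by
  have hdyadic (k : ℕ) : ((2 : ℝ) ^ (-(k : ℝ))) ^ (m - n) = ((2 : ℝ) ^ (n - m)) ^ k := by
    rw [← Real.rpow_mul zero_le_two, ← Real.rpow_natCast, ← Real.rpow_mul zero_le_two]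
    ring_nf
  calc ∫⁻ x in S ∩ (closedBall 0 1 \ closedBall 0 δ), ENNReal.ofReal (‖x‖ ^ (-n)) ∂μ
      ≤ ∫⁻ x in ⋃ k ∈ Finset.range ⌈-Real.logb 2 δ⌉₊, S ∩ (closedBall 0 ((2 : ℝ) ^ (-(k : ℝ))) \
          closedBall 0 ((2 : ℝ) ^ (-(k : ℝ)) / 2)), ENNReal.ofReal (‖x‖ ^ (-n)) ∂μ := by
        rw [← inter_iUnion₂]
        exact lintegral_mono_set
          (inter_subset_inter_right _ (closedBall_diff_closedBall_subset_biUnion_dyadic hδ))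
    _ ≤ ∑ k ∈ Finset.range ⌈-Real.logb 2 δ⌉₊, ∫⁻ x in S ∩ (closedBall 0 ((2 : ℝ) ^ (-(k : ℝ))) \
          closedBall 0 ((2 : ℝ) ^ (-(k : ℝ)) / 2)), ENNReal.ofReal (‖x‖ ^ (-n)) ∂μ :=
        setLIntegral_biUnion_finset_le _ _ _ _
    _ ≤ ∑ k ∈ Finset.range ⌈-Real.logb 2 δ⌉₊,
          ENNReal.ofReal (2 ^ |n| * A * ((2 : ℝ) ^ (n - m)) ^ k) := by
        refine Finset.sum_le_sum fun k _ => ?_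
        rw [← hdyadic]
        exact setLIntegral_inter_annulus_rpow_neg_le (by positivity) (hshell _ (by positivity)
          (Real.rpow_le_one_of_one_le_of_nonpos one_le_two (by simp)))
    _ = ENNReal.ofReal (2 ^ |n| * A * ∑ k ∈ Finset.range ⌈-Real.logb 2 δ⌉₊,
          ((2 : ℝ) ^ (n - m)) ^ k) := by
        rw [Finset.mul_sum, ENNReal.ofReal_sum_of_nonneg fun k _ => by positivity]

theorem exists_setLIntegral_inter_annulus_rpow_neg_le (hA : 0 ≤ A)
    (hshell : ∀ r, 0 < r → r ≤ 1 →
      μ (S ∩ (closedBall 0 r \ closedBall 0 (r / 2))) ≤ ENNReal.ofReal (A * r ^ m))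
    (hn : n ≤ m) :
    ∃ C, 0 < C ∧ ∀ δ, 0 < δ → δ ≤ 1 / 2 →
      ∫⁻ x in S ∩ (closedBall 0 1 \ closedBall 0 δ), ENNReal.ofReal (‖x‖ ^ (-n)) ∂μ ≤
        ENNReal.ofReal (C * if n = m then |Real.log δ| else 1) := by
  set B := 2 ^ |n| * A
  have hB : 0 ≤ B := by positivity
  rcases hn.eq_or_lt with rfl | hlt
  · refine ⟨B * (2 / Real.log 2) + 1, by positivity, fun δ hδ hδ2 => ?_⟩
    refine (setLIntegral_inter_annulus_le_geom_sum hA hshell hδ).trans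
      (ENNReal.ofReal_le_ofReal ?_)
    rw [sub_self, Real.rpow_zero, if_pos rfl]
    simp only [one_pow, Finset.sum_const, Finset.card_range, nsmul_eq_mul, mul_one]
    calc B * ⌈-Real.logb 2 δ⌉₊ ≤ B * (2 / Real.log 2) * |Real.log δ| := by
          rw [mul_assoc B]
          exact mul_le_mul_of_nonneg_left (natCeil_neg_logb_two_le hδ hδ2) hB
      _ ≤ (B * (2 / Real.log 2) + 1) * |Real.log δ| := by nlinarith [abs_nonneg (Real.log δ)]
  · set q := (2 : ℝ) ^ (n - m)
    have hq1 : q < 1 := Real.rpow_lt_one_of_one_lt_of_neg one_lt_two (by linarith)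
    have hC : 0 < B / (1 - q) + 1 :=
      add_pos_of_nonneg_of_pos (div_nonneg hB (by linarith)) one_pos
    refine ⟨B / (1 - q) + 1, hC, fun δ hδ _ => ?_⟩
    refine (setLIntegral_inter_annulus_le_geom_sum hA hshell hδ).trans
      (ENNReal.ofReal_le_ofReal ?_)
    rw [if_neg hlt.ne, mul_one]
    have hgeom := geom_sum_Ico_le_of_lt_one (m := 0) (n := ⌈-Real.logb 2 δ⌉₊) (by positivity) hq1
    rw [← Finset.range_eq_Ico, pow_zero] at hgeom
    calc B * ∑ k ∈ Finset.range ⌈-Real.logb 2 δ⌉₊, q ^ k ≤ B * (1 / (1 - q)) :=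
          mul_le_mul_of_nonneg_left hgeom hB
      _ ≤ B / (1 - q) + 1 := by rw [mul_one_div]; linarith

end Annuli

theorem hausdorffMeasure_closedBall_eq {V : Type*} [NormedAddCommGroup V] [InnerProductSpace ℝ V]
    [FiniteDimensional ℝ V] [MeasurableSpace V] [BorelSpace V] (x : V) {ρ : ℝ} (hρ : 0 ≤ ρ) :
    μH[finrank ℝ V] (closedBall x ρ) = ENNReal.ofReal (ρ ^ finrank ℝ V) *
      μH[finrank ℝ V] (closedBall (0 : EuclideanSpace ℝ (Fin (finrank ℝ V))) 1) := by
  let e := (stdOrthonormalBasis ℝ V).repr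
  rw [Measure.addHaar_closedBall' _ x hρ, ← e.isometry.hausdorffMeasure_image (Or.inl (by simp)),
    e.image_closedBall, map_zero]

section InnerProductSpace

variable {E : Type*} [NormedAddCommGroup E] [InnerProductSpace ℝ E]

theorem norm_le_two_mul_norm_orthogonalProjectionOnto {u v : E}
    (h : 2 * |⟪u, v⟫| ≤ ‖u‖ * ‖v‖) :
    ‖v‖ ≤ 2 * ‖(ℝ ∙ u)ᗮ.orthogonalProjectionOnto v‖ := by
  have hpar : 2 * ‖(ℝ ∙ u).orthogonalProjectionOnto v‖ ≤ ‖v‖ := by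
    rcases eq_or_ne u 0 with rfl | hu
    · simp
    have hu' : 0 < ‖u‖ := norm_pos_iff.2 hu
    rw [Submodule.coe_norm, ← Submodule.starProjection_apply, Submodule.starProjection_singleton,
      norm_smul, RCLike.ofReal_real_eq_id, id, Real.norm_eq_abs, abs_div,
      abs_of_pos (by positivity : (0:ℝ) < ‖u‖ ^ 2), ← mul_le_mul_iff_of_pos_left hu']
    calc ‖u‖ * (2 * (|⟪u, v⟫| / ‖u‖ ^ 2 * ‖u‖)) = 2 * |⟪u, v⟫| := by field_simp
      _ ≤ ‖u‖ * ‖v‖ := h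
  have hpyth := Submodule.norm_sq_eq_add_norm_sq_projection v (ℝ ∙ u)
  nlinarith [norm_nonneg v, norm_nonneg ((ℝ ∙ u)ᗮ.orthogonalProjectionOnto v),
    norm_nonneg ((ℝ ∙ u).orthogonalProjectionOnto v)]

theorem two_mul_abs_inner_gradient_le [CompleteSpace E] {f : E → ℝ} (hf : Differentiable ℝ f)
    {s : Set E} (hs : Convex ℝ s) {L : ℝ≥0} (hL : LipschitzOnWith L (fderiv ℝ f) s)
    {x₀ x y : E} {ρ : ℝ} (hx₀ : x₀ ∈ s) (hx : x ∈ s ∩ closedBall x₀ ρ)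
    (hy : y ∈ s ∩ closedBall x₀ ρ) (hxy : f x = f y) (hgrad : 2 * L * ρ ≤ ‖gradient f x₀‖) :
    2 * |⟪gradient f x₀, x - y⟫| ≤ ‖gradient f x₀‖ * ‖x - y‖ := by
  have hbound : ∀ z ∈ s ∩ closedBall x₀ ρ, ‖fderiv ℝ f z - fderiv ℝ f x₀‖ ≤ L * ρ := by
    intro z hz
    rw [← dist_eq_norm]
    exact (hL.dist_le_mul z hz.1 x₀ hx₀).trans (by gcongr; exact hz.2)
  have hmv := (hs.inter (convex_closedBall x₀ ρ)).norm_image_sub_le_of_norm_fderiv_le'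
    (fun z _ => hf z) hbound hy hx
  rw [hxy, sub_self, zero_sub, norm_neg, Real.norm_eq_abs] at hmv
  rw [inner_gradient_left]
  calc 2 * |fderiv ℝ f x₀ (x - y)| ≤ 2 * L * ρ * ‖x - y‖ := by linarith
    _ ≤ ‖gradient f x₀‖ * ‖x - y‖ := by gcongr

variable [FiniteDimensional ℝ E] [MeasurableSpace E] [BorelSpace E]

theorem hausdorffMeasure_le_of_two_mul_abs_inner_le {m : ℕ} (hE : finrank ℝ E = m + 1)
    {u : E} (hu : u ≠ 0) {S : Set E} {x₀ : E} {ρ : ℝ} (hρ : 0 ≤ ρ)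
    (hS : S ⊆ closedBall x₀ ρ) (hflat : ∀ x ∈ S, ∀ y ∈ S, 2 * |⟪u, x - y⟫| ≤ ‖u‖ * ‖x - y‖) :
    μH[m] S ≤ ENNReal.ofReal ((2 * ρ) ^ m) *
      μH[m] (closedBall (0 : EuclideanSpace ℝ (Fin m)) 1) := by
  set K := (ℝ ∙ u)ᗮ
  set P := K.orthogonalProjectionOnto
  have hK : finrank ℝ K = m := by
    have : Fact (finrank ℝ E = m + 1) := ⟨hE⟩
    exact Submodule.finrank_orthogonal_span_singleton hu
  have hPS : P '' S ⊆ closedBall (P x₀) ρ := by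
    rintro _ ⟨x, hx, rfl⟩
    exact (K.lipschitzWith_orthogonalProjectionOnto.dist_le_mul x x₀).trans
      (by simpa using hS hx)
  calc μH[m] S ≤ ((2 : ℝ≥0) : ℝ≥0∞) ^ (m : ℝ) * μH[m] (P '' S) := by
        refine hausdorffMeasure_le_of_dist_le_mul (fun x hx y hy => ?_) (by positivity)
        rw [dist_eq_norm, dist_eq_norm, ← map_sub]
        exact norm_le_two_mul_norm_orthogonalProjectionOnto (hflat x hx y hy)
    _ ≤ ((2 : ℝ≥0) : ℝ≥0∞) ^ (m : ℝ) * μH[m] (closedBall (P x₀) ρ) := by gcongr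
    _ = ENNReal.ofReal ((2 * ρ) ^ m) * μH[m] (closedBall (0 : EuclideanSpace ℝ (Fin m)) 1) := by
        rw [← hK, hausdorffMeasure_closedBall_eq _ hρ, hK, ← mul_assoc, mul_pow,
          ENNReal.ofReal_mul (by positivity), ENNReal.rpow_natCast, ENNReal.ofReal_pow zero_le_two]
        simp

theorem hausdorffMeasure_le_of_subset_levelSet {m : ℕ} (hE : finrank ℝ E = m + 1) {f : E → ℝ}
    (hf : Differentiable ℝ f) {s : Set E} (hs : Convex ℝ s) {L : ℝ≥0}
    (hL : LipschitzOnWith L (fderiv ℝ f) s) {T : Set E} {x₀ : E} {ρ : ℝ} (hx₀ : x₀ ∈ T)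
    (hTs : T ⊆ s) (hTf : ∀ x ∈ T, f x = f x₀) (hTρ : T ⊆ closedBall x₀ ρ)
    (hgrad : 2 * L * ρ < ‖gradient f x₀‖) :
    μH[m] T ≤ ENNReal.ofReal ((2 * ρ) ^ m) *
      μH[m] (closedBall (0 : EuclideanSpace ℝ (Fin m)) 1) := by
  have hρ : 0 ≤ ρ := by simpa using hTρ hx₀
  refine hausdorffMeasure_le_of_two_mul_abs_inner_le hE
    (norm_pos_iff.1 ((by positivity : (0 : ℝ) ≤ 2 * L * ρ).trans_lt hgrad)) hρ hTρ
    fun x hx y hy => ?_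
  exact two_mul_abs_inner_gradient_le hf hs hL (hTs hx₀) ⟨hTs hx, hTρ hx⟩ ⟨hTs hy, hTρ hy⟩
    ((hTf x hx).trans (hTf y hy).symm) hgrad.le

theorem hausdorffMeasure_inter_annulus_inter_ball_le {m : ℕ} (hE : finrank ℝ E = m + 1)
    {f : E → ℝ} (hf : Differentiable ℝ f) {L : ℝ≥0}
    (hL : LipschitzOnWith L (fderiv ℝ f) (closedBall 0 1)) {c ε : ℝ} (hc : 0 < c)
    (hεc : 4 * L * ε ≤ c) (hgrad : ∀ x, f x = 0 → x ≠ 0 → ‖x‖ ≤ 1 → c * ‖x‖ ≤ ‖gradient f x‖)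
    {r : ℝ} (hr1 : r ≤ 1) (a : E) :
    μH[m] ({x | f x = 0 ∧ x ≠ 0} ∩ (closedBall 0 r \ closedBall 0 (r / 2)) ∩ ball a (ε / 2 * r)) ≤
      ENNReal.ofReal ((2 * (ε * r)) ^ m) * μH[m] (closedBall (0 : EuclideanSpace ℝ (Fin m)) 1) := by
  set T := {x | f x = 0 ∧ x ≠ 0} ∩ (closedBall 0 r \ closedBall 0 (r / 2)) ∩ ball a (ε / 2 * r)
  rcases T.eq_empty_or_nonempty with hempty | ⟨x₀, hx₀⟩
  · rw [hempty, measure_empty]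
    exact bot_le
  obtain ⟨⟨⟨hfx₀, hx₀0⟩, hx₀r⟩, hx₀a⟩ := id hx₀
  rw [mem_closedBall_diff_closedBall_zero_iff] at hx₀r
  have hr : 0 ≤ r := by linarith [norm_nonneg x₀]
  have hTρ : T ⊆ closedBall x₀ (ε * r) := by
    intro x ⟨_, hxa⟩
    rw [mem_closedBall]
    linarith [dist_triangle_right x x₀ a, mem_ball.1 hxa, mem_ball.1 hx₀a]
  have hgrad₀ : 2 * L * (ε * r) < ‖gradient f x₀‖ :=
    calc 2 * L * (ε * r) ≤ c * (r / 2) := by nlinarith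
      _ < c * ‖x₀‖ := mul_lt_mul_of_pos_left hx₀r.1 hc
      _ ≤ ‖gradient f x₀‖ := hgrad x₀ hfx₀ hx₀0 (hx₀r.2.trans hr1)
  exact hausdorffMeasure_le_of_subset_levelSet hE hf (convex_closedBall 0 1) hL hx₀
    (fun x hx => closedBall_subset_closedBall hr1 hx.1.2.1) (fun x hx => hx.1.1.1.trans hfx₀.symm)
    hTρ hgrad₀

theorem exists_hausdorffMeasure_inter_annulus_le {m : ℕ} (hE : finrank ℝ E = m + 1)
    {f : E → ℝ} (hf : ContDiff ℝ 2 f) {c : ℝ} (hc : 0 < c)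
    (hgrad : ∀ x, f x = 0 → x ≠ 0 → ‖x‖ ≤ 1 → c * ‖x‖ ≤ ‖gradient f x‖) :
    ∃ A, 0 ≤ A ∧ ∀ r, 0 < r → r ≤ 1 →
      μH[m] ({x | f x = 0 ∧ x ≠ 0} ∩ (closedBall 0 r \ closedBall 0 (r / 2))) ≤
        ENNReal.ofReal (A * r ^ (m : ℝ)) := by
  obtain ⟨L₀, hL₀⟩ := (hf.fderiv_right (m := 1) le_rfl).contDiffOn.exists_lipschitzOnWith
    one_ne_zero (convex_closedBall (0 : E) 1) (isCompact_closedBall 0 1)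
  set L := L₀ + 1
  have hL0 : (0 : ℝ) < L := by positivity
  set ε := c / (4 * L)
  have hε : 0 < ε := by positivity
  have hεc : 4 * L * ε = c := by simp only [ε]; field_simp
  obtain ⟨t, ht⟩ := exists_finset_closedBall_subset_biUnion_ball (E := E) (half_pos hε)
  set β := (μH[m] (closedBall (0 : EuclideanSpace ℝ (Fin m)) 1)).toReal
  have hβ : μH[m] (closedBall (0 : EuclideanSpace ℝ (Fin m)) 1) = ENNReal.ofReal β :=
    (ENNReal.ofReal_toReal measure_closedBall_lt_top.ne).symm
  refine ⟨t.card * (2 * ε) ^ m * β, by positivity, fun r hr hr1 => ?_⟩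
  set Z := {x : E | f x = 0 ∧ x ≠ 0} ∩ (closedBall 0 r \ closedBall 0 (r / 2))
  calc μH[m] Z ≤ μH[m] (⋃ a ∈ t, Z ∩ ball (r • a) (ε / 2 * r)) := by
        refine measure_mono fun x hx => ?_
        obtain ⟨a, ha, hxa⟩ := mem_iUnion₂.1 (ht r hr hx.2.1)
        exact mem_iUnion₂.2 ⟨a, ha, hx, hxa⟩
    _ ≤ ∑ a ∈ t, μH[m] (Z ∩ ball (r • a) (ε / 2 * r)) := measure_biUnion_finset_le _ _
    _ ≤ ∑ _a ∈ t, ENNReal.ofReal ((2 * (ε * r)) ^ m) * ENNReal.ofReal β :=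
        Finset.sum_le_sum fun a _ => hβ ▸ hausdorffMeasure_inter_annulus_inter_ball_le hE
          (hf.differentiable two_ne_zero) (hL₀.weaken le_self_add) hc hεc.le hgrad hr1 _
    _ = t.card * ENNReal.ofReal ((2 * (ε * r)) ^ m * β) := by
        rw [Finset.sum_const, nsmul_eq_mul, ENNReal.ofReal_mul (by positivity)]
    _ = ENNReal.ofReal (t.card * (2 * ε) ^ m * β * r ^ (m : ℝ)) := by
        rw [← ENNReal.ofReal_natCast, ← ENNReal.ofReal_mul (Nat.cast_nonneg _), Real.rpow_natCast]
        congr 1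
        ring

end InnerProductSpace

theorem statement14_general
    (d : ℕ) (hd : 2 ≤ d)
    (ω : EuclideanSpace ℝ (Fin d) → ℝ)
    (hω : ContDiff ℝ 4 ω)
    (C_g : ℝ) (hCg : 0 < C_g)
    (hg2 : ∀ x : EuclideanSpace ℝ (Fin d), ω x = 0 → x ≠ 0 → ‖x‖ ≤ 1 →
      C_g * ‖x‖ ≤ ‖gradient ω x‖)
    (n : ℝ) (hn : n ≤ d - 1) :
    ∃ C : ℝ, 0 < C ∧ ∀ δ : ℝ, 0 < δ → δ ≤ 1 / 2 →
      ∫⁻ x in {x : EuclideanSpace ℝ (Fin d) | ω x = 0 ∧ x ≠ 0} ∩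
          (Metric.closedBall 0 1 \ Metric.closedBall 0 δ),
        ENNReal.ofReal (‖x‖ ^ (-n)) ∂(μH[(d : ℝ) - 1])
      ≤ ENNReal.ofReal (C * (if n + 1 = (d : ℝ) then |Real.log δ| else 1)) := by
  have hdim : finrank ℝ (EuclideanSpace ℝ (Fin d)) = (d - 1) + 1 := by
    rw [finrank_euclideanSpace_fin]
    omega
  have hcast : ((d - 1 : ℕ) : ℝ) = (d : ℝ) - 1 := by
    rw [Nat.cast_sub (by omega), Nat.cast_one]
  obtain ⟨A, hA, hshell⟩ :=
    exists_hausdorffMeasure_inter_annulus_le hdim (hω.of_le (by norm_num)) hCg hg2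
  rw [hcast] at hshell
  obtain ⟨C, hC, hbound⟩ := exists_setLIntegral_inter_annulus_rpow_neg_le hA hshell hn
  simp only [eq_sub_iff_add_eq] at hbound
  exact ⟨C, hC, hbound⟩

/-- Lemma 2.6(1), first assertion: for `n ≤ d - 1` and `0 < δ ≤ 1/2`,
`∫_{Σ₀ ∩ (B₁ ∖ B_δ)} |x|^{-n} d_Σ x ≤ C·χ_{d,n+1}(δ)`. -/
theorem statement14
    (d : ℕ) (hd : 2 ≤ d)
    (M_ω m_ω : ℝ) (hm : m_ω ≤ M_ω - 1)
    (ω : EuclideanSpace ℝ (Fin d) → ℝ)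
    (hω : ContDiff ℝ 4 ω)
    (C_ω : ℝ) (hCω : 0 < C_ω)
    (hωbd : ∀ i : ℕ, i ≤ 4 → ∀ x : EuclideanSpace ℝ (Fin d),
      ‖iteratedFDeriv ℝ i ω x‖ ≤ C_ω * (max 1 ‖x‖) ^ (M_ω - (i : ℝ)))
    (h0Sigma : ω 0 = 0)
    (hcrit0 : gradient ω 0 = 0)
    (hhess : Function.Bijective (fderiv ℝ (gradient ω) 0))
    (hnocrit : ∀ x : EuclideanSpace ℝ (Fin d), ω x = 0 → x ≠ 0 → gradient ω x ≠ 0)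
    (C_g : ℝ) (hCg : 0 < C_g)
    (hg1 : ∀ x : EuclideanSpace ℝ (Fin d), ω x = 0 → x ≠ 0 → 1 ≤ ‖x‖ →
      C_g * ‖x‖ ^ m_ω ≤ ‖gradient ω x‖)
    (hg2 : ∀ x : EuclideanSpace ℝ (Fin d), ω x = 0 → x ≠ 0 → ‖x‖ ≤ 1 →
      C_g * ‖x‖ ≤ ‖gradient ω x‖)
    (n : ℝ) (hn : n ≤ d - 1) :
    ∃ C : ℝ, 0 < C ∧ ∀ δ : ℝ, 0 < δ → δ ≤ 1 / 2 →
      ∫⁻ x in {x : EuclideanSpace ℝ (Fin d) | ω x = 0 ∧ x ≠ 0} ∩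
          (Metric.closedBall 0 1 \ Metric.closedBall 0 δ),
        ENNReal.ofReal (‖x‖ ^ (-n)) ∂(μH[(d : ℝ) - 1])
      ≤ ENNReal.ofReal (C * (if n + 1 = (d : ℝ) then |Real.log δ| else 1)) :=
  statement14_general d hd ω hω C_g hCg hg2 n hn
end

section
/- Let q(y) := ½ y·By be a non-degenerate quadratic form on ℝ^d (B an invertible symmetric d×d real matrix) and let Σ^q := {y ∈ ℝ^d : q(y) = 0}. Then for every κ > 0 there exists a constant C > 0 such that |q(y)| ≥ C|y|² for every y ∈ ℝ^d with dist(y, Σ^q) ≥ κ|y|, where dist(y, Σ^q) denotes the Euclidean distance from y to Σ^q. -/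
open Real
open scoped RealInnerProductSpace

/-- The estimate used in Section 3: for a non-degenerate quadratic form
`q(y) = ½⟨y, By⟩` on `ℝ^d` and any `κ > 0`, there is `C > 0` with
`|q(y)| ≥ C|y|²` whenever `dist(y, Σ^q) ≥ κ|y|`. -/
theorem statement19
    (d : ℕ) (hd : 1 ≤ d)
    (B : EuclideanSpace ℝ (Fin d) →L[ℝ] EuclideanSpace ℝ (Fin d))
    (hBsym : ∀ x y : EuclideanSpace ℝ (Fin d), ⟪B x, y⟫ = ⟪x, B y⟫)
    (hBinv : Function.Bijective B)
    (κ : ℝ) (hκ : 0 < κ) :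
    ∃ C : ℝ, 0 < C ∧ ∀ y : EuclideanSpace ℝ (Fin d),
      κ * ‖y‖ ≤ Metric.infDist y
        {z : EuclideanSpace ℝ (Fin d) | 1 / 2 * ⟪z, B z⟫ = 0} →
      C * ‖y‖ ^ 2 ≤ |1 / 2 * ⟪y, B y⟫| := by
  classical
  set E := EuclideanSpace ℝ (Fin d)
  set S : Set E := {z : E | 1 / 2 * ⟪z, B z⟫ = 0} with hSdef
  -- S is a cone
  have hcone : ∀ (c : ℝ) (z : E), z ∈ S → c • z ∈ S := by
    intro c z hz
    simp only [hSdef, Set.mem_setOf_eq, map_smul, real_inner_smul_left,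
      real_inner_smul_right] at hz ⊢
    linear_combination c ^ 2 * hz
  have hSne : S.Nonempty := ⟨0, by simp [hSdef]⟩
  -- normalization lemma
  have key : ∀ y : E, y ≠ 0 → κ * ‖y‖ ≤ Metric.infDist y S →
      κ ≤ Metric.infDist ((‖y‖⁻¹ : ℝ) • y) S := by
    intro y hy hle
    have hny : (0:ℝ) < ‖y‖ := norm_pos_iff.mpr hy
    rw [← not_lt, Metric.infDist_lt_iff hSne]
    push_neg
    intro z hz
    have h1 : (‖y‖ : ℝ) • z ∈ S := hcone _ _ hz
    have h2 : κ * ‖y‖ ≤ dist y ((‖y‖ : ℝ) • z) :=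
      hle.trans (Metric.infDist_le_dist_of_mem h1)
    have h3 : (‖y‖⁻¹ : ℝ) • y - z = (‖y‖⁻¹ : ℝ) • (y - (‖y‖ : ℝ) • z) := by
      rw [smul_sub, smul_smul, inv_mul_cancel₀ hny.ne', one_smul]
    rw [dist_eq_norm, h3, norm_smul, Real.norm_eq_abs,
      abs_of_pos (inv_pos.mpr hny), ← dist_eq_norm]
    have hκeq : κ = ‖y‖⁻¹ * (κ * ‖y‖) := by field_simp
    rw [hκeq]
    exact mul_le_mul_of_nonneg_left h2 (by positivity)
  -- continuity of |q|
  have hcont : Continuous fun y : E => |1 / 2 * ⟪y, B y⟫| := by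
    have : Continuous fun y : E => ⟪y, B y⟫ :=
      continuous_inner.comp (continuous_id.prodMk B.continuous)
    exact (continuous_const.mul this).abs
  set K : Set E := Metric.sphere (0:E) 1 ∩ {y : E | κ ≤ Metric.infDist y S} with hKdef
  have hKcl : IsClosed {y : E | κ ≤ Metric.infDist y S} :=
    isClosed_le continuous_const (Metric.continuous_infDist_pt S)
  have hKc : IsCompact K := (isCompact_sphere (0:E) 1).inter_right hKcl
  have humem : ∀ y : E, y ≠ 0 → κ * ‖y‖ ≤ Metric.infDist y S →
      (‖y‖⁻¹ : ℝ) • y ∈ K := by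
    intro y hy hle
    have hny : (0:ℝ) < ‖y‖ := norm_pos_iff.mpr hy
    constructor
    · simp [norm_smul, abs_of_pos (inv_pos.mpr hny), inv_mul_cancel₀ hny.ne']
    · exact key y hy hle
  -- inner product scaling
  have hinner : ∀ y : E, y ≠ 0 →
      ⟪(‖y‖⁻¹ : ℝ) • y, B ((‖y‖⁻¹ : ℝ) • y)⟫ = ‖y‖⁻¹ * (‖y‖⁻¹ * ⟪y, B y⟫) := by
    intro y hy
    simp [map_smul, real_inner_smul_left, real_inner_smul_right]
  rcases K.eq_empty_or_nonempty with hK | hK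
  · refine ⟨1, one_pos, fun y hy => ?_⟩
    by_cases h0 : y = 0
    · simp [h0]
    · exact absurd (humem y h0 hy) (by simp [hK])
  · obtain ⟨x₀, hx₀K, hmin⟩ := hKc.exists_isMinOn hK hcont.continuousOn
    have hx₀S : x₀ ∉ S := by
      intro hmem
      have : Metric.infDist x₀ S = 0 := Metric.infDist_zero_of_mem hmem
      have := hx₀K.2
      simp only [Set.mem_setOf_eq] at this
      linarith [hx₀K.2, this, hκ]
    have hCpos : (0:ℝ) < |1 / 2 * ⟪x₀, B x₀⟫| := by
      rw [abs_pos]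
      exact hx₀S
    refine ⟨|1 / 2 * ⟪x₀, B x₀⟫|, hCpos, fun y hy => ?_⟩
    by_cases h0 : y = 0
    · simp [h0]
    · have hny : (0:ℝ) < ‖y‖ := norm_pos_iff.mpr h0
      have hu : (‖y‖⁻¹ : ℝ) • y ∈ K := humem y h0 hy
      have hle := hmin hu
      simp only [Set.mem_setOf_eq] at hle
      have habs : |1 / 2 * ⟪(‖y‖⁻¹ : ℝ) • y, B ((‖y‖⁻¹ : ℝ) • y)⟫|
          = ‖y‖⁻¹ * (‖y‖⁻¹ * |1 / 2 * ⟪y, B y⟫|) := by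
        rw [hinner y h0,
          show (1/2 : ℝ) * (‖y‖⁻¹ * (‖y‖⁻¹ * ⟪y, B y⟫))
            = ‖y‖⁻¹ * (‖y‖⁻¹ * (1/2 * ⟪y, B y⟫)) by ring,
          abs_mul, abs_mul, abs_of_pos (inv_pos.mpr hny)]
      rw [habs] at hle
      have hfin := mul_le_mul_of_nonneg_left hle (le_of_lt (by positivity : (0:ℝ) < ‖y‖ ^ 2))
      calc |1 / 2 * ⟪x₀, B x₀⟫| * ‖y‖ ^ 2
          = ‖y‖ ^ 2 * |1 / 2 * ⟪x₀, B x₀⟫| := by ring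
        _ ≤ ‖y‖ ^ 2 * (‖y‖⁻¹ * (‖y‖⁻¹ * |1 / 2 * ⟪y, B y⟫|)) := hfin
        _ = |1 / 2 * ⟪y, B y⟫| := by field_simp
end
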